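/- arXiv:2306.08098 — 5 statements merged into one kernel-verified Lean document; each statement's English description precedes it below -/
import Mathlib

section
/- For every d ≥ 1 and N ≥ 2, the polynomial ψ_N^{(d)}(x_1,…,x_N) is antisymmetric (it changes sign under the interchange of any two of the blocks x_i, x_j ∈ ℝ^d), homogeneous (of total degree 𝒱_d(N)), and harmonic as a function on ℝ^{dN} (its Laplacian in all dN variables vanishes identically). -/
open scoped BigOperators ENNReal NNReal
open MeasureTheory

noncomputable section

/-- `degLexLt α β` means that the monic monomial with exponent vector `α` precedes the one
with exponent vector `β` in the enumeration of the monic monomials in `d` variables: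
first by increasing total degree, and within equal total degree lexicographically with
`t₁` coming first (so `t₁` precedes `t₂`, …, i.e. a larger power of an earlier variable
comes first). -/
def degLexLt {d : ℕ} (α β : Fin d → ℕ) : Prop :=
  (∑ j, α j) < (∑ j, β j) ∨
    ((∑ j, α j) = (∑ j, β j) ∧ ∃ i : Fin d, (∀ j, j < i → α j = β j) ∧ β i < α i)

/-- The 0-based position of the monomial with exponent vector `α` in this enumeration. -/
def monRank (d : ℕ) (α : Fin d → ℕ) : ℕ :=
  Nat.card {β : Fin d → ℕ // degLexLt β α}

/-- `monExp d i` is the exponent vector of `φ_{i+1}^{(d)}`, the `(i+1)`-st monic monomial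
in `d` variables in the above enumeration (so `monExp d 0 = 0` corresponds to `φ₁ = 1`). -/
noncomputable def monExp (d : ℕ) : ℕ → Fin d → ℕ :=
  Function.invFun (monRank d)

set_option maxHeartbeats 1000000
set_option synthInstance.maxHeartbeats 400000


namespace DLL

variable {d : ℕ}

lemma lexgt_trans {α β γ : Fin d → ℕ}
    (h1 : ∃ i, (∀ j, j < i → α j = β j) ∧ β i < α i)
    (h2 : ∃ i, (∀ j, j < i → β j = γ j) ∧ γ i < β i) :
    ∃ i, (∀ j, j < i → α j = γ j) ∧ γ i < α i := by
  obtain ⟨i1, e1, l1⟩ := h1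
  obtain ⟨i2, e2, l2⟩ := h2
  rcases lt_trichotomy i1 i2 with H | rfl | H
  · exact ⟨i1, fun j hj => (e1 j hj).trans (e2 j (hj.trans H)), by rw [← e2 i1 H]; exact l1⟩
  · exact ⟨i1, fun j hj => (e1 j hj).trans (e2 j hj), l2.trans l1⟩
  · exact ⟨i2, fun j hj => (e1 j (hj.trans H)).trans (e2 j hj),
      lt_of_lt_of_le l2 (le_of_eq (e1 i2 H).symm)⟩

lemma lexgt_trichot {α β : Fin d → ℕ} (h : α ≠ β) :
    (∃ i, (∀ j, j < i → α j = β j) ∧ β i < α i) ∨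
      (∃ i, (∀ j, j < i → β j = α j) ∧ α i < β i) := by
  have hne : (Finset.univ.filter (fun i => α i ≠ β i)).Nonempty := by
    rw [Function.ne_iff] at h
    obtain ⟨i, hi⟩ := h
    exact ⟨i, by simp [hi]⟩
  set i0 := (Finset.univ.filter (fun i => α i ≠ β i)).min' hne with hi0
  have hmem : α i0 ≠ β i0 := by
    have := (Finset.univ.filter (fun i => α i ≠ β i)).min'_mem hne
    simpa using this
  have hlt : ∀ j, j < i0 → α j = β j := by
    intro j hj
    by_contra hc
    exact absurd (Finset.min'_le _ j (by simp [hc])) (not_le.mpr hj)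
  rcases lt_or_gt_of_ne hmem with H | H
  · exact Or.inr ⟨i0, fun j hj => (hlt j hj).symm, H⟩
  · exact Or.inl ⟨i0, hlt, H⟩

lemma degLexLt_trans {α β γ : Fin d → ℕ} (h1 : degLexLt α β) (h2 : degLexLt β γ) :
    degLexLt α γ := by
  rcases h1 with h1 | ⟨e1, h1⟩ <;> rcases h2 with h2 | ⟨e2, h2⟩
  · exact Or.inl (h1.trans h2)
  · exact Or.inl (e2 ▸ h1)
  · exact Or.inl (e1 ▸ h2)
  · exact Or.inr ⟨e1.trans e2, lexgt_trans h1 h2⟩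

lemma degLexLt_irrefl (α : Fin d → ℕ) : ¬ degLexLt α α := by
  rintro (h | ⟨-, i, -, hi⟩)
  · exact lt_irrefl _ h
  · exact lt_irrefl _ hi

lemma degLexLt_trichot {α β : Fin d → ℕ} (h : α ≠ β) :
    degLexLt α β ∨ degLexLt β α := by
  rcases lt_trichotomy (∑ j, α j) (∑ j, β j) with H | H | H
  · exact Or.inl (Or.inl H)
  · rcases lexgt_trichot h with h' | h'
    · exact Or.inl (Or.inr ⟨H, h'⟩)
    · exact Or.inr (Or.inr ⟨H.symm, h'⟩)
  · exact Or.inr (Or.inl H)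

lemma deg_le_of_degLexLt {α β : Fin d → ℕ} (h : degLexLt β α) :
    (∑ j, β j) ≤ ∑ j, α j := by
  rcases h with h | ⟨h, -⟩
  · exact h.le
  · exact h.le

lemma finite_setOf_degLexLt (α : Fin d → ℕ) : {β : Fin d → ℕ | degLexLt β α}.Finite := by
  apply Set.Finite.subset (Set.Finite.pi (fun j : Fin d => Set.finite_Iic (∑ j, α j)))
  intro β hβ
  rw [Set.mem_pi]
  intro j _
  have h1 : β j ≤ ∑ j, β j := Finset.single_le_sum (fun _ _ => Nat.zero_le _) (Finset.mem_univ j)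
  exact h1.trans (deg_le_of_degLexLt hβ)

lemma monRank_eq_ncard (α : Fin d → ℕ) :
    monRank d α = {β : Fin d → ℕ | degLexLt β α}.ncard :=
  Nat.card_coe_set_eq _

lemma monRank_strictMono {α β : Fin d → ℕ} (h : degLexLt α β) :
    monRank d α < monRank d β := by
  rw [monRank_eq_ncard, monRank_eq_ncard]
  apply Set.ncard_lt_ncard _ (finite_setOf_degLexLt β)
  constructor
  · exact fun γ hγ => degLexLt_trans hγ h
  · intro hsub
    exact degLexLt_irrefl α (hsub h)

lemma monRank_injective : Function.Injective (monRank d) := by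
  intro α β h
  by_contra hne
  rcases degLexLt_trichot hne with H | H
  · exact absurd h (Nat.ne_of_lt (monRank_strictMono H))
  · exact absurd h.symm (Nat.ne_of_lt (monRank_strictMono H))

lemma monRank_surjective (hd : 0 < d) : Function.Surjective (monRank d) := by
  intro n
  induction n with
  | zero =>
    refine ⟨fun _ => 0, ?_⟩
    have hemp : {β : Fin d → ℕ | degLexLt β (fun _ => 0)} = ∅ := by
      ext β
      simp only [Set.mem_setOf_eq, Set.mem_empty_iff_false, iff_false]
      rintro (h | ⟨he, i, -, hi⟩)
      · simp at h
      · have hi' : 0 < β i := hi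
        have hle : β i ≤ ∑ j, β j :=
          Finset.single_le_sum (fun _ _ => Nat.zero_le _) (Finset.mem_univ i)
        simp only [Finset.sum_const_zero] at he
        omega
    rw [monRank_eq_ncard, hemp, Set.ncard_empty]
  | succ n ih =>
    obtain ⟨α, hα⟩ := ih
    set z : Fin d := ⟨0, hd⟩
    set γ0 : Fin d → ℕ := Function.update α z (α z + 1) with hγ0
    have hdeg : (∑ j, γ0 j) = (∑ j, α j) + 1 := by
      have h1 : (∑ j, γ0 j) = (α z + 1) + ∑ j ∈ Finset.univ \ {z}, α j :=
        Finset.sum_update_of_mem (Finset.mem_univ z) α (α z + 1)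
      have h2 : (∑ j, α j) = α z + ∑ j ∈ Finset.univ \ {z}, α j :=
        Finset.sum_eq_add_sum_sdiff_singleton_of_mem (Finset.mem_univ z) α
      omega
    have hαγ0 : degLexLt α γ0 := Or.inl (by omega)
    set S : Set (Fin d → ℕ) := {β | degLexLt α β ∧ ¬ degLexLt γ0 β} with hS
    have hSfin : S.Finite := by
      apply Set.Finite.subset ((finite_setOf_degLexLt γ0).insert γ0)
      rintro β ⟨h1, h2⟩
      rcases eq_or_ne β γ0 with rfl | hne
      · exact Set.mem_insert _ _
      · rcases degLexLt_trichot hne with H | H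
        · exact Set.mem_insert_of_mem _ H
        · exact absurd H h2
    have hSne : S.Nonempty := ⟨γ0, hαγ0, degLexLt_irrefl γ0⟩
    obtain ⟨β, hβS, hβmin⟩ := Set.exists_min_image S (monRank d) hSfin hSne
    have hmin : ∀ γ, degLexLt α γ → ¬ degLexLt γ β := by
      intro γ hγ hcon
      by_cases hγ0 : degLexLt γ0 γ
      · exact hβS.2 (degLexLt_trans hγ0 hcon)
      · have := hβmin γ ⟨hγ, hγ0⟩
        exact absurd this (not_le.mpr (monRank_strictMono hcon))
    refine ⟨β, ?_⟩
    have hset : {γ : Fin d → ℕ | degLexLt γ β} = insert α {γ | degLexLt γ α} := by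
      ext γ
      simp only [Set.mem_setOf_eq, Set.mem_insert_iff]
      constructor
      · intro hγ
        rcases eq_or_ne γ α with rfl | hne
        · exact Or.inl rfl
        · rcases degLexLt_trichot hne with H | H
          · exact Or.inr H
          · exact absurd hγ (hmin γ H)
      · rintro (rfl | hγ)
        · exact hβS.1
        · exact degLexLt_trans hγ hβS.1
    have hnm : α ∉ {γ : Fin d → ℕ | degLexLt γ α} := degLexLt_irrefl α
    rw [monRank_eq_ncard, hset,
      Set.ncard_insert_of_notMem hnm (finite_setOf_degLexLt α),
      ← monRank_eq_ncard, hα]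

lemma monRank_monExp (hd : 0 < d) (n : ℕ) : monRank d (monExp d n) = n :=
  Function.invFun_eq (monRank_surjective hd n)

lemma monExp_monRank (β : Fin d → ℕ) : monExp d (monRank d β) = β :=
  Function.leftInverse_invFun monRank_injective β

end DLL

/-- The Vandermonde-type determinant `ψ_N^{(d)}(x₁,…,x_N) = det (φ_i^{(d)}(x_j))_{i,j=1}^N`,
viewed as a polynomial in the `d·N` variables `x_{jk}` (`j` indexes the block, `k` the
coordinate inside a block). -/
noncomputable def psi (d N : ℕ) : MvPolynomial (Fin N × Fin d) ℝ :=
  Matrix.det (Matrix.of fun i j : Fin N =>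
    ∏ k : Fin d, (MvPolynomial.X (j, k) : MvPolynomial (Fin N × Fin d) ℝ) ^ monExp d (i : ℕ) k)

/-- `𝒱_d(N)`, the total degree of the Vandermonde-type determinant `ψ_N^{(d)}`. -/
noncomputable def degV (d N : ℕ) : ℕ := (psi d N).totalDegree

namespace PsiProof
open MvPolynomial Matrix

variable {d N : ℕ}

def Mmat (d N : ℕ) : Matrix (Fin N) (Fin N) (MvPolynomial (Fin N × Fin d) ℝ) :=
  Matrix.of fun i j : Fin N =>
    ∏ k : Fin d, (MvPolynomial.X (j, k) : MvPolynomial (Fin N × Fin d) ℝ) ^ monExp d (i : ℕ) k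

lemma psi_eq (d N : ℕ) : psi d N = (Mmat d N).det := rfl

lemma Mmat_apply (i j : Fin N) :
    Mmat d N i j = ∏ k : Fin d, (MvPolynomial.X (j, k) : MvPolynomial (Fin N × Fin d) ℝ)
      ^ monExp d (i : ℕ) k := rfl

lemma anti (i j : Fin N) (hij : i ≠ j) :
    MvPolynomial.rename (fun p : Fin N × Fin d => (Equiv.swap i j p.1, p.2)) (psi d N) =
      - psi d N := by
  rw [psi_eq]
  rw [show (rename (fun p : Fin N × Fin d => (Equiv.swap i j p.1, p.2))) ((Mmat d N).det)
      = ((Mmat d N).map (rename (fun p : Fin N × Fin d => (Equiv.swap i j p.1, p.2)))).det from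
    AlgHom.map_det _ _]
  have hmap : (Mmat d N).map (rename (fun p : Fin N × Fin d => (Equiv.swap i j p.1, p.2)))
      = (Mmat d N).submatrix id (Equiv.swap i j) := by
    ext a b
    simp only [Matrix.map_apply, Mmat_apply, Matrix.submatrix_apply, id_eq, map_prod, map_pow,
      rename_X]
  rw [hmap, Matrix.det_permute' (Equiv.swap i j) (Mmat d N), Equiv.Perm.sign_swap hij]
  simp

lemma psi_isHomog : (psi d N).IsHomogeneous (∑ i : Fin N, ∑ k, monExp d (i : ℕ) k) := by
  rw [psi_eq, Matrix.det_apply']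
  apply MvPolynomial.IsHomogeneous.sum
  intro σ _
  rw [show (((Equiv.Perm.sign σ : ℤ) : MvPolynomial (Fin N × Fin d) ℝ))
      = MvPolynomial.C ((Equiv.Perm.sign σ : ℤ) : ℝ) from (map_intCast (C : ℝ →+* _) _).symm]
  apply MvPolynomial.IsHomogeneous.C_mul
  have := MvPolynomial.IsHomogeneous.prod Finset.univ (fun x : Fin N => Mmat d N (σ x) x)
    (fun x : Fin N => ∑ k, monExp d ((σ x : Fin N) : ℕ) k) (fun x _ => by
      show (Mmat d N (σ x) x).IsHomogeneous _
      rw [Mmat_apply]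
      exact MvPolynomial.IsHomogeneous.prod _ _ _
        (fun k _ => MvPolynomial.isHomogeneous_X_pow _ _))
  rwa [Equiv.sum_comp σ (fun x : Fin N => ∑ k, monExp d (x : ℕ) k)] at this

lemma psi_homog : (psi d N).IsHomogeneous (degV d N) := by
  by_cases h : psi d N = 0
  · rw [degV, h]
    exact MvPolynomial.isHomogeneous_zero _ _ _
  · have h2 := psi_isHomog (d := d) (N := N)
    rwa [degV, h2.totalDegree h]





lemma monomial_prod {κ : Type*} (s : Finset κ) (f : κ → ((Fin N × Fin d) →₀ ℕ)) :
    (∏ k ∈ s, MvPolynomial.monomial (f k) (1 : ℝ)) = MvPolynomial.monomial (∑ k ∈ s, f k) 1 := by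
  induction s using Finset.cons_induction with
  | empty => simp
  | cons a s ha ih =>
    rw [Finset.prod_cons, Finset.sum_cons, ih, MvPolynomial.monomial_mul, one_mul]

def mexp (j : Fin N) (e : Fin d → ℕ) : (Fin N × Fin d) →₀ ℕ :=
  ∑ k : Fin d, Finsupp.single (j, k) (e k)

lemma mexp_apply (j : Fin N) (e : Fin d → ℕ) (j' : Fin N) (k' : Fin d) :
    mexp j e (j', k') = if j' = j then e k' else 0 := by
  rw [mexp, Finset.sum_apply']
  by_cases h : j' = j
  · subst h
    rw [if_pos rfl]
    rw [Finset.sum_eq_single k']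
    · simp
    · intro k _ hk
      exact Finsupp.single_eq_of_ne' (fun hc => hk (congrArg Prod.snd hc))
    · simp
  · rw [if_neg h]
    apply Finset.sum_eq_zero
    intro k _
    exact Finsupp.single_eq_of_ne' (fun hc => h (congrArg Prod.fst hc).symm)

lemma prodX_eq (j : Fin N) (e : Fin d → ℕ) :
    (∏ k : Fin d, (MvPolynomial.X (j, k) : MvPolynomial (Fin N × Fin d) ℝ) ^ e k)
      = MvPolynomial.monomial (mexp j e) 1 := by
  rw [mexp, ← monomial_prod]
  exact Finset.prod_congr rfl fun k _ => MvPolynomial.X_pow_eq_monomial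

lemma Mmat_eq_monomial (i : ℕ) (j : Fin N) :
    (∏ k : Fin d, (MvPolynomial.X (j, k) : MvPolynomial (Fin N × Fin d) ℝ) ^ monExp d i k)
      = MvPolynomial.monomial (mexp j (monExp d i)) 1 := prodX_eq j (monExp d i)

lemma pderiv_block {j0 j : Fin N} (k : Fin d) (hj : j ≠ j0) (e : Fin d → ℕ) :
    MvPolynomial.pderiv (j0, k)
      (∏ k' : Fin d, (MvPolynomial.X (j, k') : MvPolynomial (Fin N × Fin d) ℝ) ^ e k') = 0 := by
  rw [prodX_eq, MvPolynomial.pderiv_monomial]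
  have h0 : mexp j e (j0, k) = 0 := by
    rw [mexp_apply, if_neg (by simpa using fun h => (hj h.symm).elim)]
  rw [h0]
  simp

/-- derivation of det when only column j0 is affected -/
lemma pderiv_det (v : Fin N × Fin d) (P : Matrix (Fin N) (Fin N) (MvPolynomial (Fin N × Fin d) ℝ))
    (j0 : Fin N) (h : ∀ i j, j ≠ j0 → MvPolynomial.pderiv v (P i j) = 0) :
    MvPolynomial.pderiv v P.det
      = (P.updateCol j0 (fun i => MvPolynomial.pderiv v (P i j0))).det := by
  rw [Matrix.det_apply', Matrix.det_apply', map_sum]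
  refine Finset.sum_congr rfl fun σ _ => ?_
  rw [show ((Equiv.Perm.sign σ : ℤ) : MvPolynomial (Fin N × Fin d) ℝ)
      = MvPolynomial.C ((Equiv.Perm.sign σ : ℤ) : ℝ) from (map_intCast (C : ℝ →+* _) _).symm,
    MvPolynomial.pderiv_C_mul]
  congr 1
  have hz : MvPolynomial.pderiv v (∏ x ∈ Finset.univ.erase j0, P (σ x) x) = 0 :=
    Finset.prod_induction _ (fun p => MvPolynomial.pderiv v p = 0)
      (fun p q hp hq => by
        show MvPolynomial.pderiv v (p * q) = 0
        rw [MvPolynomial.pderiv_mul, hp, hq, zero_mul, mul_zero, add_zero])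
      (by simp) (fun x hx => h (σ x) x (Finset.ne_of_mem_erase hx))
  have hsplit2 : (∏ x : Fin N, (P.updateCol j0 fun i => MvPolynomial.pderiv v (P i j0)) (σ x) x)
      = MvPolynomial.pderiv v (P (σ j0) j0) * ∏ x ∈ Finset.univ.erase j0, P (σ x) x := by
    rw [← Finset.mul_prod_erase Finset.univ _ (Finset.mem_univ j0), Matrix.updateCol_self]
    congr 1
    refine Finset.prod_congr rfl fun x hx => ?_
    rw [Matrix.updateCol_ne (Finset.ne_of_mem_erase hx)]
  rw [← Finset.mul_prod_erase Finset.univ _ (Finset.mem_univ j0), MvPolynomial.pderiv_mul, hz,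
    mul_zero, add_zero, hsplit2]

lemma pderiv2_det (j0 : Fin N) (k : Fin d) :
    MvPolynomial.pderiv (j0, k) (MvPolynomial.pderiv (j0, k) (Mmat d N).det)
      = ((Mmat d N).updateCol j0 (fun i =>
          MvPolynomial.pderiv (j0, k) (MvPolynomial.pderiv (j0, k) (Mmat d N i j0)))).det := by
  have h1 : ∀ (i j : Fin N), j ≠ j0 → MvPolynomial.pderiv (j0, k) (Mmat d N i j) = 0 :=
    fun i j hj => pderiv_block k hj _
  rw [pderiv_det (j0, k) (Mmat d N) j0 h1]
  set P' := (Mmat d N).updateCol j0 (fun i => MvPolynomial.pderiv (j0, k) (Mmat d N i j0))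
    with hP'
  have h2 : ∀ (i j : Fin N), j ≠ j0 → MvPolynomial.pderiv (j0, k) (P' i j) = 0 := by
    intro i j hj
    rw [hP', Matrix.updateCol_ne hj]
    exact h1 i j hj
  rw [pderiv_det (j0, k) P' j0 h2]
  congr 1
  ext i j
  by_cases hj : j = j0
  · subst hj
    rw [Matrix.updateCol_self, Matrix.updateCol_self, hP', Matrix.updateCol_self]
  · rw [Matrix.updateCol_ne hj, Matrix.updateCol_ne hj, hP', Matrix.updateCol_ne hj]

def lapCoeff (d : ℕ) (i : ℕ) (k : Fin d) : ℕ := monExp d i k * (monExp d i k - 1)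

def lapExp (d : ℕ) (i : ℕ) (k : Fin d) : Fin d → ℕ :=
  fun k' => monExp d i k' - (if k' = k then 2 else 0)

lemma lap_step (j0 : Fin N) (k : Fin d) (i : ℕ) :
    MvPolynomial.pderiv (j0, k) (MvPolynomial.pderiv (j0, k)
        (MvPolynomial.monomial (mexp j0 (monExp d i)) (1 : ℝ)))
      = (lapCoeff d i k : ℝ) • MvPolynomial.monomial (mexp j0 (lapExp d i k)) (1 : ℝ) := by
  rw [MvPolynomial.pderiv_monomial, MvPolynomial.pderiv_monomial, MvPolynomial.smul_monomial,
    smul_eq_mul, mul_one]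
  have hv : (mexp j0 (monExp d i)) (j0, k) = monExp d i k := by rw [mexp_apply, if_pos rfl]
  have hexp : mexp j0 (monExp d i) - Finsupp.single (j0, k) 1 - Finsupp.single (j0, k) 1
      = mexp j0 (lapExp d i k) := by
    ext p
    obtain ⟨j', k'⟩ := p
    rw [Finsupp.tsub_apply, Finsupp.tsub_apply, mexp_apply, mexp_apply]
    by_cases hj : j' = j0
    · subst hj
      rw [if_pos rfl, if_pos rfl]
      by_cases hk : k' = k
      · rw [hk, Finsupp.single_eq_same]
        show monExp d i k - 1 - 1 = monExp d i k - (if k = k then 2 else 0)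
        rw [if_pos rfl]
        omega
      · rw [Finsupp.single_eq_of_ne' (fun hc => hk (congrArg Prod.snd hc).symm)]
        show monExp d i k' - 0 - 0 = monExp d i k' - (if k' = k then 2 else 0)
        rw [if_neg hk]
        omega
    · rw [if_neg hj, if_neg hj,
        Finsupp.single_eq_of_ne' (fun hc => hj (congrArg Prod.fst hc).symm)]
      omega
  rw [hexp, Finsupp.tsub_apply, Finsupp.single_eq_same, hv]
  congr 1
  simp only [lapCoeff, Nat.cast_mul, one_mul]

lemma lapExp_degLexLt (i : ℕ) (k : Fin d) (h2 : 2 ≤ monExp d i k) :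
    degLexLt (lapExp d i k) (monExp d i) := by
  left
  apply Finset.sum_lt_sum (fun k' _ => Nat.sub_le _ _)
  refine ⟨k, Finset.mem_univ k, ?_⟩
  show (monExp d i k - if k = k then 2 else 0) < monExp d i k
  rw [if_pos rfl]
  omega

def Amat (d N : ℕ) : Fin N → Fin N → ℝ := fun i i' =>
  ∑ k : Fin d, if (2 ≤ monExp d (i : ℕ) k ∧ monRank d (lapExp d (i : ℕ) k) = (i' : ℕ))
    then (lapCoeff d (i : ℕ) k : ℝ) else 0

lemma Amat_triangular (hd : 0 < d) (i i' : Fin N) (h : ¬ (i' : ℕ) < (i : ℕ)) :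
    Amat d N i i' = 0 := by
  apply Finset.sum_eq_zero
  intro k _
  rw [if_neg]
  rintro ⟨h2, hr⟩
  have hlt := DLL.monRank_strictMono (lapExp_degLexLt (i : ℕ) k h2)
  rw [DLL.monRank_monExp hd] at hlt
  omega

lemma lapCoeff_zero {i : ℕ} {k : Fin d} (h : ¬ 2 ≤ monExp d i k) : lapCoeff d i k = 0 := by
  have h01 : monExp d i k = 0 ∨ monExp d i k = 1 := by omega
  rcases h01 with h0 | h0 <;> simp [lapCoeff, h0]

lemma lap_column (hd : 0 < d) (j0 : Fin N) (i : Fin N) :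
    (∑ k : Fin d, MvPolynomial.pderiv (j0, k) (MvPolynomial.pderiv (j0, k) (Mmat d N i j0)))
      = ∑ i' : Fin N, Amat d N i i' • Mmat d N i' j0 := by
  have hM : ∀ i'' : Fin N, Mmat d N i'' j0
      = MvPolynomial.monomial (mexp j0 (monExp d (i'' : ℕ))) 1 := by
    intro i''
    rw [Mmat_apply, Mmat_eq_monomial]
  calc (∑ k : Fin d, MvPolynomial.pderiv (j0, k) (MvPolynomial.pderiv (j0, k) (Mmat d N i j0)))
      = ∑ k : Fin d, (lapCoeff d (i : ℕ) k : ℝ)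
          • MvPolynomial.monomial (mexp j0 (lapExp d (i : ℕ) k)) (1 : ℝ) := by
        refine Finset.sum_congr rfl fun k _ => ?_
        rw [hM i, lap_step]
    _ = ∑ k : Fin d, ∑ i' : Fin N,
          (if (2 ≤ monExp d (i : ℕ) k ∧ monRank d (lapExp d (i : ℕ) k) = (i' : ℕ))
            then (lapCoeff d (i : ℕ) k : ℝ) else 0) • Mmat d N i' j0 := by
        refine Finset.sum_congr rfl fun k _ => ?_
        by_cases h2 : 2 ≤ monExp d (i : ℕ) k
        · have hrlt : monRank d (lapExp d (i : ℕ) k) < (i : ℕ) := by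
            have hlt := DLL.monRank_strictMono (lapExp_degLexLt (i : ℕ) k h2)
            rwa [DLL.monRank_monExp hd] at hlt
          have hrN : monRank d (lapExp d (i : ℕ) k) < N := hrlt.trans i.isLt
          rw [Finset.sum_eq_single (⟨monRank d (lapExp d (i : ℕ) k), hrN⟩ : Fin N)]
          · rw [if_pos ⟨h2, rfl⟩, hM]
            rw [show monExp d ((((⟨monRank d (lapExp d (i : ℕ) k), hrN⟩ : Fin N)) : ℕ))
                = lapExp d (i : ℕ) k from DLL.monExp_monRank _]
          · intro i' _ hne
            rw [if_neg, zero_smul]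
            rintro ⟨-, hr⟩
            exact hne (Fin.ext hr.symm)
          · intro h
            exact absurd (Finset.mem_univ _) h
        · rw [lapCoeff_zero h2, Nat.cast_zero, zero_smul]
          symm
          apply Finset.sum_eq_zero
          intro i' _
          rw [if_neg (fun hc => h2 hc.1), zero_smul]
    _ = ∑ i' : Fin N, Amat d N i i' • Mmat d N i' j0 := by
        rw [Finset.sum_comm]
        refine Finset.sum_congr rfl fun i' _ => ?_
        rw [Amat, Finset.sum_smul]

lemma psi_harmonic (hd : 0 < d) :
    (∑ v : Fin N × Fin d, MvPolynomial.pderiv v (MvPolynomial.pderiv v (psi d N))) = 0 := by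
  classical
  rw [psi_eq, Fintype.sum_prod_type]
  set M := Mmat d N with hMdef
  have step1 : ∀ j0 : Fin N,
      (∑ k : Fin d, MvPolynomial.pderiv (j0, k) (MvPolynomial.pderiv (j0, k) M.det))
        = ∑ i' : Fin N, Matrix.cramer M (fun i => Amat d N i i' • M i' j0) j0 := by
    intro j0
    have e1 : ∀ k : Fin d,
        MvPolynomial.pderiv (j0, k) (MvPolynomial.pderiv (j0, k) M.det)
          = Matrix.cramer M
              (fun i => MvPolynomial.pderiv (j0, k) (MvPolynomial.pderiv (j0, k) (M i j0))) j0 := by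
      intro k
      rw [pderiv2_det j0 k, Matrix.cramer_apply]
    simp_rw [e1]
    rw [show (∑ k : Fin d, Matrix.cramer M
        (fun i => MvPolynomial.pderiv (j0, k) (MvPolynomial.pderiv (j0, k) (M i j0))) j0)
      = Matrix.cramer M (∑ k : Fin d,
          (fun i => MvPolynomial.pderiv (j0, k) (MvPolynomial.pderiv (j0, k) (M i j0)))) j0 by
      rw [map_sum, Finset.sum_apply]]
    rw [show (∑ k : Fin d,
          (fun i => MvPolynomial.pderiv (j0, k) (MvPolynomial.pderiv (j0, k) (M i j0))))
        = fun i => ∑ i' : Fin N, Amat d N i i' • M i' j0 by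
      funext i
      rw [Finset.sum_apply]
      exact lap_column hd j0 i]
    rw [show (fun i => ∑ i' : Fin N, Amat d N i i' • M i' j0)
        = ∑ i' : Fin N, (fun i => Amat d N i i' • M i' j0) by
      funext i
      rw [Finset.sum_apply]]
    rw [map_sum, Finset.sum_apply]
  have step2 : ∀ (j0 : Fin N) (i' : Fin N),
      Matrix.cramer M (fun i => Amat d N i i' • M i' j0) j0
        = M i' j0 * ∑ p : Fin N,
            MvPolynomial.C (Amat d N p i') * Matrix.cramer M (Pi.single p 1) j0 := by
    intro j0 i'
    have hvec : (fun i => Amat d N i i' • M i' j0)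
        = (M i' j0 • (fun i => MvPolynomial.C (Amat d N i i'))
            : Fin N → MvPolynomial (Fin N × Fin d) ℝ) := by
      funext i
      simp only [Pi.smul_apply, smul_eq_mul]
      rw [MvPolynomial.smul_eq_C_mul, mul_comm]
    rw [hvec, LinearMap.map_smul, Pi.smul_apply, smul_eq_mul]
    congr 1
    have hsingle : (fun i => MvPolynomial.C (Amat d N i i') : Fin N → MvPolynomial (Fin N × Fin d) ℝ)
        = ∑ p : Fin N, (MvPolynomial.C (Amat d N p i') : MvPolynomial (Fin N × Fin d) ℝ)
            • (Pi.single p 1 : Fin N → MvPolynomial (Fin N × Fin d) ℝ) := by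
      funext q
      rw [Finset.sum_apply, Finset.sum_eq_single q]
      · simp
      · intro p _ hpq
        simp [Pi.single_eq_of_ne hpq.symm]
      · intro h
        exact absurd (Finset.mem_univ _) h
    rw [hsingle, map_sum, Finset.sum_apply]
    refine Finset.sum_congr rfl fun p _ => ?_
    rw [LinearMap.map_smul, Pi.smul_apply, smul_eq_mul]
  have step3 : ∀ i' : Fin N,
      (∑ j0 : Fin N, M i' j0 * ∑ p : Fin N,
          MvPolynomial.C (Amat d N p i') * Matrix.cramer M (Pi.single p 1) j0) = 0 := by
    intro i'
    have : (∑ j0 : Fin N, M i' j0 * ∑ p : Fin N,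
          MvPolynomial.C (Amat d N p i') * Matrix.cramer M (Pi.single p 1) j0)
        = ∑ p : Fin N, MvPolynomial.C (Amat d N p i')
            * ∑ j0 : Fin N, M i' j0 * Matrix.cramer M (Pi.single p 1) j0 := by
      rw [show (∑ j0 : Fin N, M i' j0 * ∑ p : Fin N,
            MvPolynomial.C (Amat d N p i') * Matrix.cramer M (Pi.single p 1) j0)
          = ∑ j0 : Fin N, ∑ p : Fin N, M i' j0
              * (MvPolynomial.C (Amat d N p i') * Matrix.cramer M (Pi.single p 1) j0) from
        Finset.sum_congr rfl fun j0 _ => Finset.mul_sum _ _ _, Finset.sum_comm]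
      refine Finset.sum_congr rfl fun p _ => ?_
      rw [Finset.mul_sum]
      refine Finset.sum_congr rfl fun j0 _ => ?_
      ring
    rw [this]
    apply Finset.sum_eq_zero
    intro p _
    have hmv : (∑ j0 : Fin N, M i' j0 * Matrix.cramer M (Pi.single p 1) j0)
        = (M *ᵥ (Matrix.cramer M (Pi.single p 1))) i' := rfl
    rw [hmv, Matrix.mulVec_cramer M (Pi.single p 1)]
    by_cases hip : i' = p
    · subst hip
      simp only [Pi.smul_apply, Pi.single_eq_same, smul_eq_mul, mul_one]
      rw [Amat_triangular hd i' i' (lt_irrefl _), map_zero, zero_mul]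
    · simp [Pi.single_eq_of_ne hip]
  calc (∑ j0 : Fin N, ∑ k : Fin d,
        MvPolynomial.pderiv (j0, k) (MvPolynomial.pderiv (j0, k) M.det))
      = ∑ j0 : Fin N, ∑ i' : Fin N, Matrix.cramer M (fun i => Amat d N i i' • M i' j0) j0 := by
        exact Finset.sum_congr rfl fun j0 _ => step1 j0
    _ = ∑ i' : Fin N, ∑ j0 : Fin N, M i' j0 * ∑ p : Fin N,
          MvPolynomial.C (Amat d N p i') * Matrix.cramer M (Pi.single p 1) j0 := by
        rw [Finset.sum_comm]
        exact Finset.sum_congr rfl fun i' _ =>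
          Finset.sum_congr rfl fun j0 _ => step2 j0 i'
    _ = 0 := by
        rw [Finset.sum_congr rfl fun i' _ => step3 i']
        simp

end PsiProof


/-- **Proposition 2.1.** For `d ≥ 1`, `N ≥ 2`, the polynomial `ψ_N^{(d)}` is antisymmetric
(it changes sign under the interchange of any two blocks `x_i, x_j ∈ ℝ^d`), homogeneous of
total degree `𝒱_d(N)`, and harmonic (its Laplacian in all `dN` variables vanishes). -/
theorem psi_antisymmetric_homogeneous_harmonic (d N : ℕ) (hd : 1 ≤ d) (hN : 2 ≤ N) :
    (∀ i j : Fin N, i ≠ j →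
        MvPolynomial.rename (fun p : Fin N × Fin d => (Equiv.swap i j p.1, p.2)) (psi d N) =
          - psi d N) ∧
    (psi d N).IsHomogeneous (degV d N) ∧
    ∑ v : Fin N × Fin d, MvPolynomial.pderiv v (MvPolynomial.pderiv v (psi d N)) = 0 := by
  refine ⟨fun i j hij => PsiProof.anti i j hij, PsiProof.psi_homog, PsiProof.psi_harmonic hd⟩
end
end

section
/- Let P(x_1,…,x_N) be a nonzero homogeneous polynomial in N blocks of d real variables each, which is antisymmetric, i.e. changes sign under the interchange of any two blocks x_i, x_j ∈ ℝ^d. Then the total degree of P is at least 𝒱_d(N), the total degree of the Vandermonde-type determinant ψ_N^{(d)}. -/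
open scoped BigOperators ENNReal NNReal
open MeasureTheory

noncomputable section

namespace DLAux

open MvPolynomial


noncomputable instance piLexLO (d : ℕ) : LinearOrder (Lex ((_i : Fin d) → ℕ)) :=
  @Pi.Lex.linearOrder (Fin d) (fun _ => ℕ) _ (Finite.to_wellFoundedLT) _

variable {d : ℕ}

def key (α : Fin d → ℕ) : ℕ ×ₗ (Lex (Fin d → ℕ))ᵒᵈ :=
  toLex (∑ j, α j, OrderDual.toDual (toLex α))

lemma degLexLt_iff (α β : Fin d → ℕ) : degLexLt α β ↔ key α < key β := by
  unfold degLexLt key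
  rw [Prod.Lex.lt_iff]
  simp only [ofLex_toLex, OrderDual.toDual_lt_toDual]
  constructor
  · rintro (h | ⟨h, i, h1, h2⟩)
    · exact Or.inl h
    · exact Or.inr ⟨h, show toLex β < toLex α from ⟨i, fun j hj => (h1 j hj).symm, h2⟩⟩
  · rintro (h | ⟨h, h2⟩)
    · exact Or.inl h
    · obtain ⟨i, h1, h2⟩ := (show Pi.Lex (· < ·) (fun {_} => (· < ·)) β α from h2)
      exact Or.inr ⟨h, i, fun j hj => (h1 j hj).symm, h2⟩

lemma key_injective : Function.Injective (key (d := d)) := by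
  intro α β h
  have h' : (∑ j, α j, OrderDual.toDual (toLex α))
      = (∑ j, β j, OrderDual.toDual (toLex β)) := congrArg ofLex h
  have h2 := congrArg Prod.snd h'
  exact toLex.injective (OrderDual.toDual.injective h2)

lemma degLexLt_trans {α β γ : Fin d → ℕ} (h1 : degLexLt α β) (h2 : degLexLt β γ) :
    degLexLt α γ :=
  (degLexLt_iff _ _).2 (((degLexLt_iff _ _).1 h1).trans ((degLexLt_iff _ _).1 h2))

lemma degLexLt_irrefl (α : Fin d → ℕ) : ¬ degLexLt α α := fun h =>
  lt_irrefl _ ((degLexLt_iff _ _).1 h)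

lemma degLexLt_trichotomy (α β : Fin d → ℕ) : degLexLt α β ∨ α = β ∨ degLexLt β α := by
  rcases lt_trichotomy (key α) (key β) with h | h | h
  · exact Or.inl ((degLexLt_iff _ _).2 h)
  · exact Or.inr (Or.inl (key_injective h))
  · exact Or.inr (Or.inr ((degLexLt_iff _ _).2 h))

lemma sum_le_of_degLexLt {α β : Fin d → ℕ} (h : degLexLt α β) : ∑ j, α j ≤ ∑ j, β j := by
  rcases h with h | ⟨h, -⟩
  · exact h.le
  · exact h.le

lemma finite_setOf_degLexLt (α : Fin d → ℕ) : {β | degLexLt β α}.Finite := by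
  apply (Set.finite_Icc (fun _ : Fin d => 0) (fun _ => ∑ j, α j)).subset
  intro β hβ
  simp only [Set.mem_Icc, Pi.le_def]
  refine ⟨fun j => Nat.zero_le _, fun j => ?_⟩
  exact le_trans (Finset.single_le_sum (f := β) (fun _ _ => Nat.zero_le _) (Finset.mem_univ j))
    (sum_le_of_degLexLt hβ)

lemma monRank_eq (α : Fin d → ℕ) : monRank d α = {β | degLexLt β α}.ncard := by
  rw [monRank, ← Nat.card_coe_set_eq]
  rfl

lemma monRank_lt_monRank {α β : Fin d → ℕ} (h : degLexLt α β) :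
    monRank d α < monRank d β := by
  rw [monRank_eq, monRank_eq]
  have hsub : {γ | degLexLt γ α} ⊆ {γ | degLexLt γ β} := fun γ hγ => degLexLt_trans hγ h
  refine Set.ncard_lt_ncard ?_ (finite_setOf_degLexLt β)
  exact (Set.ssubset_iff_of_subset hsub).2 ⟨α, h, degLexLt_irrefl α⟩

lemma monRank_injective : Function.Injective (monRank d) := by
  intro α β h
  rcases degLexLt_trichotomy α β with h1 | h1 | h1
  · exact absurd h (monRank_lt_monRank h1).ne
  · exact h1
  · exact absurd h.symm (monRank_lt_monRank h1).ne

lemma monRank_unbounded (hd : d ≠ 0) (n : ℕ) : ∃ α : Fin d → ℕ, n ≤ monRank d α := by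
  induction n with
  | zero => exact ⟨0, Nat.zero_le _⟩
  | succ n ih =>
    obtain ⟨α, hα⟩ := ih
    refine ⟨fun _ => (∑ j, α j) + 1, ?_⟩
    have hlt : degLexLt α (fun _ => (∑ j, α j) + 1) := by
      left
      have : ∑ _j : Fin d, ((∑ j, α j) + 1) = d * ((∑ j, α j) + 1) := by
        simp [Finset.sum_const, mul_comm]
      rw [this]
      calc ∑ j, α j < (∑ j, α j) + 1 := Nat.lt_succ_self _
        _ ≤ d * ((∑ j, α j) + 1) := Nat.le_mul_of_pos_left _ (Nat.pos_of_ne_zero hd)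
    exact Nat.succ_le_of_lt (lt_of_le_of_lt hα (monRank_lt_monRank hlt))

lemma monRank_pred {β : Fin d → ℕ} {m : ℕ} (h : monRank d β = m + 1) :
    ∃ α : Fin d → ℕ, monRank d α = m := by
  have hfin := finite_setOf_degLexLt β
  have hne : {γ | degLexLt γ β}.Nonempty := by
    apply Set.nonempty_of_ncard_ne_zero
    rw [← monRank_eq, h]
    omega
  obtain ⟨α, hαmem, hmax⟩ := Set.Finite.exists_maximalFor key _ hfin hne
  refine ⟨α, ?_⟩
  have hset : {γ | degLexLt γ α} = {γ | degLexLt γ β} \ {α} := by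
    ext γ
    simp only [Set.mem_setOf_eq, Set.mem_diff, Set.mem_singleton_iff]
    constructor
    · intro hγ
      refine ⟨degLexLt_trans hγ hαmem, ?_⟩
      rintro rfl
      exact degLexLt_irrefl _ hγ
    · rintro ⟨hγβ, hγα⟩
      rcases degLexLt_trichotomy γ α with h1 | h1 | h1
      · exact h1
      · exact absurd h1 hγα
      · have := le_antisymm ((degLexLt_iff _ _).1 h1).le (hmax hγβ ((degLexLt_iff _ _).1 h1).le)
        exact absurd (key_injective this).symm hγα
  rw [monRank_eq, hset, Set.ncard_diff_singleton_of_mem hαmem, ← monRank_eq, h]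
  omega

lemma monRank_surjective (hd : d ≠ 0) : Function.Surjective (monRank d) := by
  intro n
  obtain ⟨α, hα⟩ := monRank_unbounded hd n
  obtain ⟨k, hk⟩ : ∃ k, monRank d α = n + k := ⟨monRank d α - n, by omega⟩
  clear hα
  induction k generalizing α with
  | zero => exact ⟨α, hk⟩
  | succ k ih =>
    obtain ⟨γ, hγ⟩ := monRank_pred (β := α) (m := n + k) (by omega)
    exact ih γ hγ

lemma monRank_monExp (hd : d ≠ 0) (n : ℕ) : monRank d (monExp d n) = n :=
  Function.rightInverse_invFun (monRank_surjective hd) n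

lemma monExp_monRank (α : Fin d → ℕ) : monExp d (monRank d α) = α :=
  Function.leftInverse_invFun monRank_injective α

lemma monDeg_mono (hd : d ≠ 0) {i j : ℕ} (h : i ≤ j) :
    ∑ k, monExp d i k ≤ ∑ k, monExp d j k := by
  by_contra hc
  push_neg at hc
  have h1 : degLexLt (monExp d j) (monExp d i) := Or.inl hc
  have h2 := monRank_lt_monRank h1
  rw [monRank_monExp hd, monRank_monExp hd] at h2
  omega


lemma sum_monExp_le {d : ℕ} (hd : d ≠ 0) {N : ℕ} (α : Fin N → Fin d → ℕ)
    (hinj : Function.Injective α) :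
    ∑ i ∈ Finset.range N, (∑ k, monExp d i k) ≤ ∑ j, ∑ k, α j k := by
  set D : ℕ → ℕ := fun i => ∑ k, monExp d i k with hD
  set r : Fin N → ℕ := fun j => monRank d (α j) with hr
  have hrinj : Function.Injective r := fun a b h => hinj (monRank_injective h)
  have hα : ∀ j, ∑ k, α j k = D (r j) := by
    intro j
    simp only [hD, hr, monExp_monRank]
  set T : Finset ℕ := Finset.image r Finset.univ with hT
  have hTcard : T.card = N := by
    rw [hT, Finset.card_image_of_injective _ hrinj, Finset.card_univ, Fintype.card_fin]
  have hsumT : ∑ m ∈ T, D m = ∑ j, D (r j) :=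
    Finset.sum_image (fun a _ b _ h => hrinj h)
  set f := T.orderEmbOfFin hTcard with hf
  have hf_le : ∀ n (h : n < N), n ≤ f ⟨n, h⟩ := by
    intro n
    induction n with
    | zero => intro h; exact Nat.zero_le _
    | succ n ih =>
      intro h
      have h' : n < N := by omega
      have h1 := f.strictMono (show (⟨n, h'⟩ : Fin N) < ⟨n + 1, h⟩ from Nat.lt_succ_self n)
      have h2 := ih h'
      omega
  have himg : Finset.image (fun i => f i) Finset.univ = T := by
    apply Finset.eq_of_subset_of_card_le
    · intro x hx
      simp only [Finset.mem_image, Finset.mem_univ, true_and] at hx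
      obtain ⟨i, rfl⟩ := hx
      exact Finset.orderEmbOfFin_mem T hTcard i
    · rw [hTcard, Finset.card_image_of_injective _ f.injective, Finset.card_univ,
        Fintype.card_fin]
  calc ∑ i ∈ Finset.range N, D i = ∑ i : Fin N, D i := (Fin.sum_univ_eq_sum_range D N).symm
    _ ≤ ∑ i : Fin N, D (f i) := by
        refine Finset.sum_le_sum fun i _ => monDeg_mono hd ?_
        simpa using hf_le i i.isLt
    _ = ∑ m ∈ T, D m := by
        rw [← himg, Finset.sum_image (fun a _ b _ h => f.injective h)]
    _ = ∑ j, D (r j) := hsumT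
    _ = ∑ j, ∑ k, α j k := by simp [hα]



lemma degV_le (d N : ℕ) : degV d N ≤ ∑ i ∈ Finset.range N, ∑ k, monExp d i k := by
  rw [degV, psi, Matrix.det_apply]
  refine (totalDegree_finset_sum _ _).trans (Finset.sup_le fun σ _ => ?_)
  refine (totalDegree_smul_le _ _).trans ?_
  refine (totalDegree_finset_prod _ _).trans ?_
  have hle : ∀ i : Fin N,
      ((Matrix.of fun i j : Fin N =>
        ∏ k : Fin d, (X (j, k) : MvPolynomial (Fin N × Fin d) ℝ) ^ monExp d (i : ℕ) k)
          (σ i) i).totalDegree ≤ ∑ k, monExp d (σ i : ℕ) k := by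
    intro i
    simp only [Matrix.of_apply]
    refine (totalDegree_finset_prod _ _).trans ?_
    refine Finset.sum_le_sum fun k _ => ?_
    rw [totalDegree_X_pow]
  calc ∑ i, ((Matrix.of fun i j : Fin N =>
        ∏ k : Fin d, (X (j, k) : MvPolynomial (Fin N × Fin d) ℝ) ^ monExp d (i : ℕ) k)
          (σ i) i).totalDegree
      ≤ ∑ i, ∑ k, monExp d (σ i : ℕ) k := Finset.sum_le_sum fun i _ => hle i
    _ = ∑ i : Fin N, ∑ k, monExp d (i : ℕ) k :=
        Equiv.sum_comp σ (fun i : Fin N => ∑ k, monExp d (i : ℕ) k)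
    _ = ∑ i ∈ Finset.range N, ∑ k, monExp d i k :=
        Fin.sum_univ_eq_sum_range (fun i => ∑ k, monExp d i k) N



lemma exists_good_mono {d N : ℕ} (P : MvPolynomial (Fin N × Fin d) ℝ) (hP : P ≠ 0)
    {n : ℕ} (hhom : P.IsHomogeneous n)
    (hanti : ∀ i j : Fin N, i ≠ j →
      MvPolynomial.rename (fun p : Fin N × Fin d => (Equiv.swap i j p.1, p.2)) P = - P) :
    ∃ α : Fin N → Fin d → ℕ, Function.Injective α ∧ ∑ j, ∑ k, α j k = P.totalDegree := by
  obtain ⟨m, hm⟩ := MvPolynomial.ne_zero_iff.1 hP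
  refine ⟨fun j k => m (j, k), ?_, ?_⟩
  · intro i j hij
    by_contra hne
    have hswap := hanti i j hne
    set e : (Fin N × Fin d) ≃ (Fin N × Fin d) := (Equiv.swap i j).prodCongr (Equiv.refl _) with he
    have hfun : (fun p : Fin N × Fin d => (Equiv.swap i j p.1, p.2)) = e := rfl
    have hminv : Finsupp.mapDomain (⇑e) m = m := by
      rw [← Finsupp.equivMapDomain_eq_mapDomain]
      ext p
      rw [Finsupp.equivMapDomain_apply]
      obtain ⟨a, k⟩ := p
      have hsymm : e.symm (a, k) = (Equiv.swap i j a, k) := by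
        simp [he, Equiv.symm_swap]
      rw [hsymm]
      rcases eq_or_ne a i with rfl | hai
      · rw [Equiv.swap_apply_left]
        exact (congrFun hij k).symm
      · rcases eq_or_ne a j with rfl | haj
        · rw [Equiv.swap_apply_right]
          exact congrFun hij k
        · rw [Equiv.swap_apply_of_ne_of_ne hai haj]
    have hco := MvPolynomial.coeff_rename_mapDomain (⇑e) e.injective P m
    rw [hminv, ← hfun, hswap] at hco
    rw [MvPolynomial.coeff_neg] at hco
    have : MvPolynomial.coeff m P = 0 := by linarith
    exact hm this
  · have hdeg : m.degree = n := by
      by_contra hne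
      exact hm (hhom.coeff_eq_zero hne)
    have htd : P.totalDegree = n := hhom.totalDegree hP
    rw [htd, ← hdeg]
    rw [Finsupp.degree]
    rw [← Fintype.sum_prod_type]
    symm
    apply Finset.sum_subset (Finset.subset_univ _)
    intro p _ hp
    exact Finsupp.notMem_support_iff.1 hp

end DLAux

/-- **Proposition 2.2.** Every nonzero homogeneous antisymmetric polynomial in `N` blocks
of `d` real variables has total degree at least `𝒱_d(N)`, the total degree of the
Vandermonde-type determinant `ψ_N^{(d)}`. -/
theorem antisymmetric_poly_degree_ge (d N : ℕ)
    (P : MvPolynomial (Fin N × Fin d) ℝ) (hP : P ≠ 0)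
    (hhom : ∃ n, P.IsHomogeneous n)
    (hanti : ∀ i j : Fin N, i ≠ j →
      MvPolynomial.rename (fun p : Fin N × Fin d => (Equiv.swap i j p.1, p.2)) P = - P) :
    degV d N ≤ P.totalDegree := by
  rcases eq_or_ne d 0 with rfl | hd
  · have h := DLAux.degV_le 0 N
    simp only [Finset.univ_eq_empty, Finset.sum_empty, Finset.sum_const_zero] at h
    omega
  · obtain ⟨n, hn⟩ := hhom
    obtain ⟨α, hinj, hdeg⟩ := DLAux.exists_good_mono P hP hn hanti
    exact (DLAux.degV_le d N).trans (hdeg ▸ DLAux.sum_monExp_le hd α hinj)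
end
end

section
/- Let d ≥ 1, m ≥ 0 and let N be an integer with N_m^{(d)} ≤ N ≤ N_{m+1}^{(d)}, where N_m^{(d)} = C(m+d, d). Then the degree of the Vandermonde-type determinant satisfies 𝒱_d(N) = N(m+1) − ((m+d+1)/(d+1))·N_m^{(d)}. -/
open scoped BigOperators ENNReal NNReal
open MeasureTheory

noncomputable section

/-! The determinant expands as `∑_σ sign σ · ∏_j φ_{σ j}(x_j)`. Every term is a monomial of the same
total degree `∑_{i<N} deg φ_{i+1}`, and distinct permutations give distinct exponents because the
`φ_i` are distinct, so nothing cancels and `𝒱_d(N) = ∑_{i<N} deg φ_{i+1}`.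

Since there are `C(m+d,d)` monomials of degree `≤ m` (stars and bars) and the enumeration is by
degree first, `deg φ_{i+1} ≤ m ↔ i < N_m^{(d)}`; so the degrees are constant, equal to `m+1`, on
`[N_m, N_{m+1})`. Summing level by level, with Pascal's rule at each step, gives
`𝒱_d(N) + C(m+d+1,d+1) = N(m+1)`, and `(m+d+1)·C(m+d,d) = (d+1)·C(m+d+1,d+1)`. -/

open Finset

def sumLeEquivSumEq (d m : ℕ) :
    {β : Fin d → ℕ // ∑ j, β j ≤ m} ≃ {γ : Fin (d + 1) → ℕ // ∑ j, γ j = m} where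
  toFun β := ⟨Fin.cons (m - ∑ j, β.1 j) β.1, by rw [Fin.sum_cons]; have := β.2; omega⟩
  invFun γ := ⟨Fin.tail γ.1, by
    have := γ.2
    rw [Fin.sum_univ_succ] at this
    simp only [Fin.tail]
    omega⟩
  left_inv β := by simp
  right_inv γ := by
    have hγ := γ.2
    rw [Fin.sum_univ_succ] at hγ
    ext j
    refine Fin.cases ?_ (fun i => rfl) j
    simp only [Fin.cons_zero, Fin.tail]
    omega

theorem ncard_setOf_sum_le (d m : ℕ) :
    {β : Fin d → ℕ | ∑ j, β j ≤ m}.ncard = (m + d).choose d := by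
  rw [← Nat.card_coe_set_eq]
  change Nat.card {β : Fin d → ℕ // ∑ j, β j ≤ m} = _
  rw [Nat.card_congr ((sumLeEquivSumEq d m).trans
    (Sym.equivNatSumOfFintype (Fin (d + 1)) m).symm), Nat.card_eq_fintype_card,
    Sym.card_sym_eq_choose, Fintype.card_fin, add_right_comm, Nat.add_sub_cancel,
    add_comm d m, Nat.choose_symm_add]

theorem finite_setOf_sum_le (d m : ℕ) : {β : Fin d → ℕ | ∑ j, β j ≤ m}.Finite :=
  Set.finite_of_ncard_pos <| (ncard_setOf_sum_le d m).symm ▸ Nat.choose_pos (by omega)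

section monRank

variable {d : ℕ}

def degLexKey (α : Fin d → ℕ) : ℕ ×ₗ (Lex (Fin d → ℕ))ᵒᵈ :=
  toLex (∑ j, α j, OrderDual.toDual (toLex α))

theorem degLexKey_injective : Function.Injective (degLexKey (d := d)) :=
  fun _ _ h => toLex.injective (OrderDual.toDual.injective (Prod.mk.inj (toLex.injective h)).2)

theorem degLexLt_iff_degLexKey_lt {α β : Fin d → ℕ} :
    degLexLt α β ↔ degLexKey α < degLexKey β := by
  simp only [degLexLt, degLexKey, Prod.Lex.toLex_lt_toLex, OrderDual.toDual_lt_toDual]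
  show _ ↔ _ ∨ _ ∧ ∃ i, (∀ j < i, β j = α j) ∧ β i < α i
  simp only [eq_comm (a := β _)]

theorem degLexLt_irrefl (α : Fin d → ℕ) : ¬ degLexLt α α := by
  rw [degLexLt_iff_degLexKey_lt]
  exact lt_irrefl _

theorem degLexLt_trans {α β γ : Fin d → ℕ} (hαβ : degLexLt α β) (hβγ : degLexLt β γ) :
    degLexLt α γ := by
  rw [degLexLt_iff_degLexKey_lt] at *
  exact hαβ.trans hβγ

theorem sum_le_sum_of_degLexLt {α β : Fin d → ℕ} (h : degLexLt α β) :
    ∑ j, α j ≤ ∑ j, β j := by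
  rcases h with h | ⟨h, -⟩
  exacts [h.le, h.le]

theorem finite_setOf_degLexLt (α : Fin d → ℕ) : {β | degLexLt β α}.Finite :=
  (finite_setOf_sum_le d _).subset fun _ => sum_le_sum_of_degLexLt

theorem monRank_eq_ncard (α : Fin d → ℕ) : monRank d α = {β | degLexLt β α}.ncard :=
  (Nat.card_coe_set_eq _).symm

theorem monRank_lt_monRank {α β : Fin d → ℕ} (h : degLexLt α β) :
    monRank d α < monRank d β := by
  rw [monRank_eq_ncard, monRank_eq_ncard]
  exact Set.ncard_lt_ncard ⟨fun γ hγ => degLexLt_trans hγ h, fun hsub => degLexLt_irrefl α (hsub h)⟩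
    (finite_setOf_degLexLt β)

theorem monRank_injective : Function.Injective (monRank d) := by
  intro α β h
  by_contra hne
  rcases lt_or_gt_of_ne (degLexKey_injective.ne hne) with hlt | hlt
  · exact (monRank_lt_monRank (degLexLt_iff_degLexKey_lt.2 hlt)).ne h
  · exact (monRank_lt_monRank (degLexLt_iff_degLexKey_lt.2 hlt)).ne' h

theorem image_monRank_setOf_degLexLt (α : Fin d → ℕ) :
    monRank d '' {β | degLexLt β α} = Set.Iio (monRank d α) := by
  refine Set.eq_of_subset_of_ncard_le ?_ ?_ (Set.finite_Iio _)
  · rintro _ ⟨β, hβ, rfl⟩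
    exact monRank_lt_monRank hβ
  · rw [Set.ncard_Iio_nat, Set.ncard_image_of_injective _ monRank_injective, monRank_eq_ncard]

theorem monRank_surjective (hd : 0 < d) : Function.Surjective (monRank d) := by
  have : Nonempty (Fin d) := ⟨⟨0, hd⟩⟩
  intro n
  obtain ⟨_, ⟨α, rfl⟩, hn⟩ :=
    (Set.infinite_range_of_injective (monRank_injective (d := d))).exists_gt n
  obtain ⟨β, -, hβ⟩ : n ∈ monRank d '' {β | degLexLt β α} := by
    rwa [image_monRank_setOf_degLexLt]
  exact ⟨β, hβ⟩

theorem monRank_lt_choose_iff (α : Fin d → ℕ) (m : ℕ) :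
    monRank d α < (m + d).choose d ↔ ∑ j, α j ≤ m := by
  rw [monRank_eq_ncard, ← ncard_setOf_sum_le d m]
  constructor
  · intro h
    by_contra! hα
    refine (Set.ncard_le_ncard (fun β hβ => ?_) (finite_setOf_degLexLt α)).not_gt h
    exact Or.inl (lt_of_le_of_lt hβ hα)
  · intro hα
    exact Set.ncard_lt_ncard ⟨fun β hβ => (sum_le_sum_of_degLexLt hβ).trans hα,
      fun hsub => degLexLt_irrefl α (hsub hα)⟩ (finite_setOf_sum_le d m)

theorem monRank_monExp (hd : 0 < d) (n : ℕ) : monRank d (monExp d n) = n :=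
  Function.rightInverse_invFun (monRank_surjective hd) n

theorem monExp_injective (hd : 0 < d) : Function.Injective (monExp d) :=
  Function.RightInverse.injective (monRank_monExp hd)

theorem sum_monExp_le_iff (hd : 0 < d) (n m : ℕ) :
    ∑ j, monExp d n j ≤ m ↔ n < (m + d).choose d := by
  rw [← monRank_lt_choose_iff, monRank_monExp hd]

end monRank

section levelSum

variable {d : ℕ} (w : ℕ → ℕ)

theorem sum_range_eq_of_choose_le (hw : ∀ i m, w i ≤ m ↔ i < (m + d).choose d) {m N : ℕ}
    (h₁ : (m + d).choose d ≤ N) (h₂ : N ≤ (m + d + 1).choose d) :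
    ∑ i ∈ range N, w i =
      ∑ i ∈ range ((m + d).choose d), w i + (N - (m + d).choose d) * (m + 1) := by
  rw [← sum_range_add_sum_Ico _ h₁, ← Nat.card_Ico, ← smul_eq_mul, ← sum_const]
  refine congrArg _ (sum_congr rfl fun i hi => ?_)
  rw [mem_Ico] at hi
  have hlow := (hw i m).not.2 hi.1.not_gt
  have hup := (hw i (m + 1)).2 (by rw [add_right_comm]; omega)
  omega

theorem sum_range_add_choose_eq (hw : ∀ i m, w i ≤ m ↔ i < (m + d).choose d) {m N : ℕ}
    (h₁ : (m + d).choose d ≤ N) (h₂ : N ≤ (m + d + 1).choose d) :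
    ∑ i ∈ range N, w i + (m + d + 1).choose (d + 1) = N * (m + 1) := by
  induction m generalizing N with
  | zero =>
    have hw0 : w 0 = 0 := Nat.le_zero.1 ((hw 0 0).2 (by simp))
    rw [sum_range_eq_of_choose_le w hw h₁ h₂]
    simp only [zero_add, Nat.choose_self, sum_range_one, hw0, mul_one] at h₁ ⊢
    omega
  | succ m ih =>
    rw [sum_range_eq_of_choose_le w hw h₁ h₂]
    rw [show m + 1 + d = m + d + 1 by omega] at h₁ ⊢
    have hprev := ih (Nat.choose_le_choose d (by omega)) le_rfl
    rw [Nat.choose_succ_succ (m + d + 1) d]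
    zify [h₁] at hprev ⊢
    linear_combination hprev

end levelSum

namespace MvPolynomial

variable {R ι κ : Type*} [CommRing R] [Fintype ι] [DecidableEq ι] [Fintype κ]

theorem prod_X_pow_eq_monomial_equivFunOnFinite {τ : Type*} [Fintype τ] (f : τ → ℕ) :
    ∏ p, (X p : MvPolynomial τ R) ^ f p = monomial (Finsupp.equivFunOnFinite.symm f) 1 := by
  classical
  rw [monomial_eq, C_1, one_mul, Finsupp.prod_fintype _ _ fun _ => pow_zero _]
  rfl

theorem det_of_prod_X_pow_eq_sum_monomial (e : ι → κ → ℕ) :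
    (Matrix.of fun i j : ι => ∏ k, (X (j, k) : MvPolynomial (ι × κ) R) ^ e i k).det =
      ∑ σ : Equiv.Perm ι, monomial (Finsupp.equivFunOnFinite.symm fun p => e (σ p.1) p.2)
        ((Equiv.Perm.sign σ : ℤ) : R) := by
  rw [Matrix.det_apply']
  refine sum_congr rfl fun σ _ => ?_
  have hprod : ∏ j, Matrix.of (fun i j : ι => ∏ k, (X (j, k) : MvPolynomial (ι × κ) R) ^ e i k)
      (σ j) j = ∏ p : ι × κ, X p ^ e (σ p.1) p.2 := by
    rw [Fintype.prod_prod_type]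
    rfl
  rw [hprod, prod_X_pow_eq_monomial_equivFunOnFinite, ← map_intCast (C (σ := ι × κ) (R := R)),
    C_mul_monomial, mul_one]

theorem totalDegree_det_of_prod_X_pow [Nontrivial R] (e : ι → κ → ℕ)
    (he : Function.Injective e) :
    (Matrix.of fun i j : ι => ∏ k, (X (j, k) : MvPolynomial (ι × κ) R) ^ e i k).det.totalDegree =
      ∑ i, ∑ k, e i k := by
  classical
  rw [det_of_prod_X_pow_eq_sum_monomial]
  set E : Equiv.Perm ι → ι × κ →₀ ℕ := fun σ =>
    Finsupp.equivFunOnFinite.symm fun p => e (σ p.1) p.2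
  have hdeg (σ : Equiv.Perm ι) : ((E σ).sum fun _ n => n) = ∑ i, ∑ k, e i k := by
    rw [Finsupp.sum_fintype _ _ fun _ => rfl, Fintype.sum_prod_type]
    exact Equiv.sum_comp σ fun i => ∑ k, e i k
  have hE : Function.Injective E := fun σ τ h =>
    Equiv.ext fun i => he <| by ext k; exact DFunLike.congr_fun h (i, k)
  have hcoeff : coeff (E 1) (∑ σ, monomial (E σ) ((Equiv.Perm.sign σ : ℤ) : R)) = 1 := by
    rw [coeff_sum, sum_eq_single 1 (fun σ _ hσ => ?_) (fun h => (h (mem_univ 1)).elim)]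
    · rw [coeff_monomial, if_pos rfl, Equiv.Perm.sign_one, Units.val_one, Int.cast_one]
    · rw [coeff_monomial, if_neg (hE.ne hσ)]
  apply le_antisymm
  · exact (totalDegree_finsetSum _ _).trans
      (Finset.sup_le fun σ _ => (totalDegree_monomial_le _ _).trans (hdeg σ).le)
  · exact hdeg 1 ▸ le_totalDegree (mem_support_iff.2 (hcoeff ▸ one_ne_zero))

end MvPolynomial

theorem degV_eq_sum_range {d : ℕ} (hd : 0 < d) (N : ℕ) :
    degV d N = ∑ i ∈ range N, ∑ k, monExp d i k := by
  rw [degV, psi, MvPolynomial.totalDegree_det_of_prod_X_pow (fun i : Fin N => monExp d i)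
    ((monExp_injective hd).comp Fin.val_injective),
    Fin.sum_univ_eq_sum_range (fun i => ∑ k, monExp d i k)]

/-- The value of `𝒱_d(N)` for intermediate `N`: if `N_m^{(d)} ≤ N ≤ N_{m+1}^{(d)}`, where
`N_m^{(d)} = C(m+d, d)`, then `𝒱_d(N) = N(m+1) − ((m+d+1)/(d+1))·N_m^{(d)}`. -/
theorem degV_intermediate (d m N : ℕ) (hd : 1 ≤ d)
    (h₁ : Nat.choose (m + d) d ≤ N) (h₂ : N ≤ Nat.choose (m + d + 1) d) :
    (degV d N : ℝ) =
      (N : ℝ) * ((m : ℝ) + 1) -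
        ((m : ℝ) + (d : ℝ) + 1) / ((d : ℝ) + 1) * (Nat.choose (m + d) d : ℝ) := by
  have hsum : degV d N + (m + d + 1).choose (d + 1) = N * (m + 1) := by
    rw [degV_eq_sum_range hd]
    exact sum_range_add_choose_eq _ (sum_monExp_le_iff hd) h₁ h₂
  have hchoose :
      ((m : ℝ) + d + 1) / (d + 1) * (m + d).choose d = (m + d + 1).choose (d + 1) := by
    rw [div_mul_eq_mul_div, div_eq_iff (by positivity)]
    exact_mod_cast Nat.add_one_mul_choose_eq (m + d) d
  rw [hchoose, eq_sub_iff_add_eq]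
  exact_mod_cast hsum
end
end

section
/- For all natural numbers m ≥ 1 and d ≥ 1, one has 0 ≤ A^{(d)}(m) − G^{(d)}(m) ≤ (d−1)²/(8m), where A^{(d)}(m) = ((m+1)+(m+2)+…+(m+d))/d = m + (d+1)/2 and G^{(d)}(m) = ((m+1)(m+2)⋯(m+d))^{1/d}. -/
/-!
Pair `m + 1 + k` with `m + d - k`: each pair has mean `A = m + (d + 1) / 2`, and its product
`A² - c²` (with `c = k - (d - 1) / 2`) is at least `Y = (m + 1)(m + d)`. Then `log x ≥ 1 - 1 / x`
gives `log (A² - c²) ≥ 2 log A - c² / Y`, and averaging over the pairs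
`log G ≥ log A - σ² / (2Y)`, where `σ² = (d² - 1) / 12` is the variance of `m + 1, …, m + d`.
Hence `A - G ≤ A (1 - exp (-σ² / (2Y))) ≤ A σ² / (2Y) ≤ (d - 1)² / (8m)`.
-/

open Finset Real

lemma geom_mean_le_arith_mean_unweighted {ι : Type*} {s : Finset ι} (hs : s.Nonempty) {z : ι → ℝ}
    (hz : ∀ i ∈ s, 0 ≤ z i) : (∏ i ∈ s, z i) ^ ((1 : ℝ) / #s) ≤ (∑ i ∈ s, z i) / #s := by
  simpa using Real.geom_mean_le_arith_mean s (fun _ => 1) z (by simp) (by simpa using hs) hz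

lemma sum_range_add_reflect {M : Type*} [AddCommMonoid M] (f : ℕ → M) (d : ℕ) :
    ∑ k ∈ range d, (f k + f (d - 1 - k)) = 2 • ∑ k ∈ range d, f k := by
  rw [sum_add_distrib, sum_range_reflect, two_nsmul]

lemma sum_range_natCast_sub_sq (c : ℝ) (d : ℕ) :
    ∑ k ∈ range d, ((k : ℝ) - c) ^ 2 = d * ((d - 1) * (2 * d - 1) / 6 - c * (d - 1) + c ^ 2) := by
  induction d with
  | zero => simp
  | succ n ih => rw [sum_range_succ, ih]; push_cast; ring

lemma two_mul_log_sub_le_log_sq_sub_sq {a c Y : ℝ} (ha : 0 < a) (hY : 0 < Y)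
    (h : Y ≤ a ^ 2 - c ^ 2) : 2 * log a - c ^ 2 / Y ≤ log (a ^ 2 - c ^ 2) := by
  have hpos : 0 < a ^ 2 - c ^ 2 := hY.trans_le h
  have hlog := one_sub_inv_le_log_of_pos (div_pos hpos (pow_pos ha 2))
  have hlhs : 1 - ((a ^ 2 - c ^ 2) / a ^ 2)⁻¹ = -(c ^ 2 / (a ^ 2 - c ^ 2)) := by
    field_simp; ring
  have hdiv : c ^ 2 / (a ^ 2 - c ^ 2) ≤ c ^ 2 / Y := div_le_div_of_nonneg_left (sq_nonneg c) hY h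
  rw [hlhs, log_div hpos.ne' (pow_pos ha 2).ne', log_pow, Nat.cast_ofNat] at hlog
  linarith

section Symmetric

variable {d : ℕ} {f : ℕ → ℝ} {a : ℝ}

lemma sum_range_eq_mul_of_symmetric (hsymm : ∀ k < d, f k + f (d - 1 - k) = 2 * a) :
    ∑ k ∈ range d, f k = d * a := by
  have h := sum_range_add_reflect f d
  rw [sum_congr rfl fun k hk => hsymm k (mem_range.mp hk), sum_const, card_range] at h
  rw [nsmul_eq_mul, nsmul_eq_mul, Nat.cast_ofNat] at h
  linarith

lemma sub_geom_mean_le_of_symmetric (hd : 0 < d) {Y : ℝ} (hY : 0 < Y)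
    (hf : ∀ k < d, 0 < f k) (hsymm : ∀ k < d, f k + f (d - 1 - k) = 2 * a)
    (hprod : ∀ k < d, Y ≤ f k * f (d - 1 - k)) :
    a - (∏ k ∈ range d, f k) ^ ((1 : ℝ) / d) ≤ a * (∑ k ∈ range d, (f k - a) ^ 2) / (2 * d * Y) := by
  have ha : 0 < a := by linarith [hsymm 0 hd, hf 0 hd, hf (d - 1 - 0) (by omega)]
  have hpair : ∀ k < d, f k * f (d - 1 - k) = a ^ 2 - (f k - a) ^ 2 := fun k hk => by
    rw [eq_sub_of_add_eq' (hsymm k hk)]; ring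
  have hlog_prod : log (∏ k ∈ range d, f k) * 2 = ∑ k ∈ range d, log (f k * f (d - 1 - k)) := by
    rw [log_prod fun k hk => (hf k (mem_range.mp hk)).ne', mul_two, ← two_nsmul,
      ← sum_range_add_reflect]
    refine sum_congr rfl fun k hk => (log_mul (hf k ?_).ne' (hf _ ?_).ne').symm <;>
      simp only [mem_range] at hk <;> omega
  have hlog_pair : ∀ k < d, 2 * log a - (f k - a) ^ 2 / Y ≤ log (f k * f (d - 1 - k)) :=
    fun k hk => hpair k hk ▸ two_mul_log_sub_le_log_sq_sub_sq ha hY (hpair k hk ▸ hprod k hk)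
  set t := (∑ k ∈ range d, (f k - a) ^ 2) / (2 * d * Y)
  have hlog : log a - t ≤ log ((∏ k ∈ range d, f k) ^ ((1 : ℝ) / d)) := by
    have hsum := sum_le_sum fun k hk => hlog_pair k (mem_range.mp hk)
    rw [sum_sub_distrib, sum_const, card_range, nsmul_eq_mul, ← sum_div, ← hlog_prod] at hsum
    rw [log_rpow (prod_pos fun k hk => hf k (mem_range.mp hk))]
    calc log a - t = (d * (2 * log a) - (∑ k ∈ range d, (f k - a) ^ 2) / Y) / (2 * d) := by
          simp only [t]; field_simp
      _ ≤ log (∏ k ∈ range d, f k) * 2 / (2 * d) := by gcongr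
      _ = 1 / d * log (∏ k ∈ range d, f k) := by field_simp
  have hexp := (le_log_iff_exp_le (rpow_pos_of_pos
    (prod_pos fun k hk => hf k (mem_range.mp hk)) _)).mp hlog
  rw [exp_sub, exp_log ha, div_eq_mul_inv, ← exp_neg] at hexp
  have hlin : a * (1 - t) ≤ a * exp (-t) :=
    mul_le_mul_of_nonneg_left (by linarith [add_one_le_exp (-t)]) ha.le
  rw [mul_div_assoc]
  linarith

end Symmetric

lemma sum_range_natCast_sub_half_sq (d : ℕ) :
    ∑ k ∈ range d, ((k : ℝ) - (d - 1) / 2) ^ 2 = d * ((d : ℝ) ^ 2 - 1) / 12 := by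
  rw [sum_range_natCast_sub_sq]; ring

section Consecutive

variable {d k : ℕ} (c : ℝ)

lemma add_natCast_add_add_natCast_reflect (hk : k < d) :
    c + k + (c + ((d - 1 - k : ℕ) : ℝ)) = 2 * (c + (d - 1) / 2) := by
  rw [Nat.cast_sub (by omega), Nat.cast_sub (by omega), Nat.cast_one]; ring

lemma mul_add_le_add_natCast_mul_add_natCast_reflect (hk : k < d) :
    c * (c + (d - 1)) ≤ (c + k) * (c + ((d - 1 - k : ℕ) : ℝ)) := by
  have hk : (k : ℝ) + 1 ≤ d := by exact_mod_cast hk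
  rw [Nat.cast_sub (by omega), Nat.cast_sub (by omega), Nat.cast_one]
  nlinarith [(Nat.cast_nonneg k : (0 : ℝ) ≤ k)]

end Consecutive

lemma add_half_mul_sq_sub_one_div_le {d m : ℕ} (hd : 1 ≤ d) (hm : 1 ≤ m) :
    ((m : ℝ) + 1 + (d - 1) / 2) * ((d : ℝ) ^ 2 - 1) / (24 * ((m + 1) * (m + 1 + (d - 1)))) ≤
      ((d : ℝ) - 1) ^ 2 / (8 * m) := by
  have hd1 : (1 : ℝ) ≤ d := by exact_mod_cast hd
  have hm1 : (1 : ℝ) ≤ m := by exact_mod_cast hm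
  -- true only because `d` is an integer: the inequality fails for real `d` just above `1`
  have hd2 : (0 : ℝ) ≤ (d - 1) * (d - 2) := by
    rcases hd.eq_or_lt with rfl | h
    · norm_num
    · have h2 : (2 : ℝ) ≤ d := by exact_mod_cast h
      exact mul_nonneg (by linarith) (by linarith)
  rw [div_le_div_iff₀ (by positivity) (by positivity)]
  nlinarith [mul_nonneg hd2 (by positivity : (0 : ℝ) ≤ m * (m + 1)),
    mul_nonneg hd2 (by positivity : (0 : ℝ) ≤ m),
    mul_nonneg (by linarith : (0 : ℝ) ≤ d - 1) (by positivity : (0 : ℝ) ≤ m * (m + 1))]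

/-- **Lemma 2.6.** For all `m, d ≥ 1`, with `A^{(d)}(m) = ((m+1)+⋯+(m+d))/d` the arithmetic
mean and `G^{(d)}(m) = ((m+1)⋯(m+d))^{1/d}` the geometric mean of `m+1, …, m+d`, one has
`0 ≤ A^{(d)}(m) − G^{(d)}(m) ≤ (d−1)²/(8m)`. -/
theorem arithmetic_geometric_mean_gap (d m : ℕ) (hd : 1 ≤ d) (hm : 1 ≤ m) :
    0 ≤ (∑ k ∈ Finset.range d, ((m : ℝ) + 1 + (k : ℝ))) / (d : ℝ) -
        (∏ k ∈ Finset.range d, ((m : ℝ) + 1 + (k : ℝ))) ^ ((1 : ℝ) / (d : ℝ)) ∧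
    (∑ k ∈ Finset.range d, ((m : ℝ) + 1 + (k : ℝ))) / (d : ℝ) -
        (∏ k ∈ Finset.range d, ((m : ℝ) + 1 + (k : ℝ))) ^ ((1 : ℝ) / (d : ℝ)) ≤
      ((d : ℝ) - 1) ^ 2 / (8 * (m : ℝ)) := by
  have hd1 : (1 : ℝ) ≤ d := by exact_mod_cast hd
  have hsymm := fun k (hk : k < d) => add_natCast_add_add_natCast_reflect ((m : ℝ) + 1) hk
  have hprod := fun k (hk : k < d) =>
    mul_add_le_add_natCast_mul_add_natCast_reflect ((m : ℝ) + 1) hk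
  have hgap := sub_geom_mean_le_of_symmetric (by omega) (mul_pos (by positivity) (by linarith))
    (fun k _ => by positivity) hsymm hprod
  have hamgm := geom_mean_le_arith_mean_unweighted (nonempty_range_iff.2 (by omega))
    fun k (_ : k ∈ range d) => (by positivity : (0 : ℝ) ≤ m + 1 + k)
  have hvar : ∑ k ∈ range d, ((m : ℝ) + 1 + k - ((m : ℝ) + 1 + (d - 1) / 2)) ^ 2 =
      d * ((d : ℝ) ^ 2 - 1) / 12 := by
    rw [← sum_range_natCast_sub_half_sq]; exact sum_congr rfl fun k _ => by ring
  rw [card_range] at hamgm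
  rw [sum_range_eq_mul_of_symmetric hsymm, mul_div_cancel_left₀ _ (by positivity)] at hamgm ⊢
  refine ⟨sub_nonneg.mpr hamgm, hgap.trans (le_of_eq_of_le ?_ (add_half_mul_sq_sub_one_div_le hd hm))⟩
  rw [hvar]
  field_simp
  ring
end

section
/- Let d ≥ 1 and set ξ_d(N) = (d/(d+1))·(d!)^{1/d}·N^{1+1/d} − (d/2)·N. Then for all N ≥ 2, 0 ≤ 𝒱_d(N) − ξ_d(N) ≤ (d!)^{−1/d}·(d/2 + d(d−1)²(2d+3)/(8(d+1)))·N^{1−1/d}. In particular 𝒱_d(N) ≥ ξ_d(N) and 𝒱_d(N) = (d/(d+1))(d!)^{1/d} N^{1+1/d} − (d/2)N + O(N^{1−1/d}) as N → ∞. -/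
open scoped BigOperators ENNReal NNReal
open MeasureTheory

noncomputable section

/-- `ξ_d(N) = (d/(d+1))·(d!)^{1/d}·N^{1+1/d} − (d/2)·N`. -/
noncomputable def xi (d N : ℕ) : ℝ :=
  (d : ℝ) / ((d : ℝ) + 1) * (Nat.factorial d : ℝ) ^ ((1 : ℝ) / (d : ℝ)) *
      (N : ℝ) ^ (1 + (1 : ℝ) / (d : ℝ)) -
    (d : ℝ) / 2 * (N : ℝ)

namespace DegLex

variable {d : ℕ}

lemma irrefl (α : Fin d → ℕ) : ¬ degLexLt α α := by
  rintro (h | ⟨-, i, -, hi⟩)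
  · exact lt_irrefl _ h
  · exact lt_irrefl _ hi

lemma trans {α β γ : Fin d → ℕ} (h1 : degLexLt α β) (h2 : degLexLt β γ) :
    degLexLt α γ := by
  rcases h1 with h1 | ⟨e1, i, hji, hlt⟩
  · rcases h2 with h2 | ⟨e2, _⟩
    · exact Or.inl (h1.trans h2)
    · exact Or.inl (e2 ▸ h1)
  · rcases h2 with h2 | ⟨e2, i', hji', hlt'⟩
    · exact Or.inl (e1 ▸ h2)
    · refine Or.inr ⟨e1.trans e2, ?_⟩
      rcases lt_trichotomy i i' with hii | hii | hii
      · exact ⟨i, fun j hj => (hji j hj).trans (hji' j (hj.trans hii)),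
          (hji' i hii) ▸ hlt⟩
      · exact ⟨i, fun j hj => (hji j hj).trans (hji' j (hii ▸ hj)),
          lt_trans (hii ▸ hlt') hlt⟩
      · exact ⟨i', fun j hj => (hji j (hj.trans hii)).trans (hji' j hj),
          (hji i' hii).symm ▸ hlt'⟩

lemma total {α β : Fin d → ℕ} (h : α ≠ β) : degLexLt α β ∨ degLexLt β α := by
  rcases lt_trichotomy (∑ j, α j) (∑ j, β j) with hs | hs | hs
  · exact Or.inl (Or.inl hs)
  · have hne : (Finset.univ.filter fun j => α j ≠ β j).Nonempty := by
      by_contra hc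
      rw [Finset.not_nonempty_iff_eq_empty, Finset.filter_eq_empty_iff] at hc
      exact h (funext fun j => not_not.mp (hc (Finset.mem_univ j)))
    set i := Finset.min' _ hne with hidef
    have hi : α i ≠ β i := (Finset.mem_filter.mp (Finset.min'_mem _ hne)).2
    have hagree : ∀ j, j < i → α j = β j := by
      intro j hj
      by_contra hc
      exact absurd (Finset.min'_le _ j (Finset.mem_filter.mpr ⟨Finset.mem_univ _, hc⟩))
        (not_le.mpr hj)
    rcases lt_or_gt_of_ne hi with hlt | hlt
    · exact Or.inr (Or.inr ⟨hs.symm, i, fun j hj => (hagree j hj).symm, hlt⟩)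
    · exact Or.inl (Or.inr ⟨hs, i, hagree, hlt⟩)
  · exact Or.inr (Or.inl hs)

lemma asymm {α β : Fin d → ℕ} (h : degLexLt α β) : ¬ degLexLt β α :=
  fun h' => irrefl α (trans h h')

lemma sum_le_of_lt {α β : Fin d → ℕ} (h : degLexLt α β) : (∑ j, α j) ≤ ∑ j, β j := by
  rcases h with h | ⟨h, -⟩
  · exact h.le
  · exact h.le

lemma finite_down (α : Fin d → ℕ) : {β | degLexLt β α}.Finite := by
  apply Set.Finite.subset (Set.Finite.pi (fun _ : Fin d => Set.finite_Iic (∑ j, α j)))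
  intro β hβ
  rw [Set.mem_pi]
  intro j _
  have h1 : β j ≤ ∑ j, β j := Finset.single_le_sum (fun _ _ => Nat.zero_le _) (Finset.mem_univ j)
  exact Set.mem_Iic.mpr (h1.trans (sum_le_of_lt hβ))

lemma monRank_eq (α : Fin d → ℕ) : monRank d α = {β | degLexLt β α}.ncard :=
  (Nat.card_coe_set_eq _)

lemma down_subset {α β : Fin d → ℕ} (h : degLexLt α β) :
    {γ | degLexLt γ α} ⊆ {γ | degLexLt γ β} := fun _ hγ => trans hγ h

lemma rank_strictMono {α β : Fin d → ℕ} (h : degLexLt α β) :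
    monRank d α < monRank d β := by
  rw [monRank_eq, monRank_eq]
  apply Set.ncard_lt_ncard _ (finite_down β)
  exact ⟨down_subset h, fun hs => irrefl α (hs h)⟩

lemma rank_injective : Function.Injective (monRank d) := by
  intro α β h
  by_contra hne
  rcases total hne with hlt | hlt
  · exact absurd h (Nat.ne_of_lt (rank_strictMono hlt))
  · exact absurd h.symm (Nat.ne_of_lt (rank_strictMono hlt))

lemma exists_min {S : Set (Fin d → ℕ)} (hS : S.Nonempty) :
    ∃ α ∈ S, ∀ β ∈ S, β ≠ α → degLexLt α β := by
  have hne : (monRank d '' S).Nonempty := hS.image _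
  obtain ⟨α, hαS, hα⟩ := Nat.sInf_mem hne
  refine ⟨α, hαS, fun β hβ hne' => ?_⟩
  rcases total (Ne.symm hne') with h | h
  · exact h
  · have h1 : sInf (monRank d '' S) ≤ monRank d β :=
      Nat.sInf_le (Set.mem_image_of_mem (monRank d) hβ)
    rw [← hα] at h1
    exact absurd h1 (not_le.mpr (rank_strictMono h))

lemma exists_rank_zero : ∃ α : Fin d → ℕ, monRank d α = 0 := by
  obtain ⟨α, -, hα⟩ := exists_min (Set.univ_nonempty (α := Fin d → ℕ))
  refine ⟨α, ?_⟩
  rw [monRank_eq, Set.ncard_eq_zero (finite_down α)]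
  ext β
  simp only [Set.mem_setOf_eq, Set.mem_empty_iff_false, iff_false]
  intro hβ
  by_cases hbe : β = α
  · exact irrefl α (hbe ▸ hβ)
  · exact asymm (hα β (Set.mem_univ β) hbe) hβ

lemma exists_rank_succ (hd : 1 ≤ d) (α : Fin d → ℕ) :
    ∃ α' : Fin d → ℕ, monRank d α' = monRank d α + 1 := by
  have hSne : {γ | degLexLt α γ}.Nonempty := by
    refine ⟨fun j => α j + 1, Or.inl ?_⟩
    show (∑ j, α j) < ∑ j, (α j + 1)
    have h1 : (∑ j, (α j + 1)) = (∑ j, α j) + d := by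
      rw [Finset.sum_add_distrib]; simp
    omega
  obtain ⟨α', hα'S, hmin⟩ := exists_min hSne
  refine ⟨α', ?_⟩
  have hseteq : {γ | degLexLt γ α'} = insert α {γ | degLexLt γ α} := by
    ext β
    simp only [Set.mem_setOf_eq, Set.mem_insert_iff]
    constructor
    · intro hβ
      by_cases hba : β = α
      · exact Or.inl hba
      rcases total hba with h | h
      · exact Or.inr h
      · -- α ≺ β, so β ∈ S; minimality of α'
        by_cases hba' : β = α'
        · exact absurd (hba' ▸ hβ) (irrefl α')
        · exact absurd hβ (asymm (hmin β h hba'))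
    · rintro (rfl | hβ)
      · exact hα'S
      · exact trans hβ hα'S
  have hnm : α ∉ {γ | degLexLt γ α} := irrefl α
  rw [monRank_eq, monRank_eq, hseteq, Set.ncard_insert_of_notMem hnm (finite_down α)]

lemma rank_surjective (hd : 1 ≤ d) : Function.Surjective (monRank d) := by
  intro n
  induction n with
  | zero => exact exists_rank_zero
  | succ n ih =>
    obtain ⟨α, hα⟩ := ih
    obtain ⟨α', hα'⟩ := exists_rank_succ hd α
    exact ⟨α', by rw [hα', hα]⟩

lemma monRank_monExp (hd : 1 ≤ d) (n : ℕ) : monRank d (monExp d n) = n :=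
  Function.rightInverse_invFun (rank_surjective hd) n

lemma monExp_injective (hd : 1 ≤ d) : Function.Injective (monExp d) :=
  Function.LeftInverse.injective (g := monRank d) (monRank_monExp hd)

end DegLex
namespace DegLex

variable {d : ℕ}

lemma finite_sum_le (d j : ℕ) : {α : Fin d → ℕ | (∑ i, α i) ≤ j}.Finite := by
  apply Set.Finite.subset (Set.Finite.pi (fun _ : Fin d => Set.finite_Iic j))
  intro β hβ
  rw [Set.mem_pi]
  intro i _
  have h1 : β i ≤ ∑ i, β i := Finset.single_le_sum (fun _ _ => Nat.zero_le _) (Finset.mem_univ i)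
  exact Set.mem_Iic.mpr (h1.trans hβ)

def cle (d j : ℕ) : ℕ := {α : Fin d → ℕ | (∑ i, α i) ≤ j}.ncard

lemma cle_eq : ∀ d j, cle d j = (j + d).choose d := by
  intro d
  induction d with
  | zero =>
    intro j
    have h : {α : Fin 0 → ℕ | (∑ i, α i) ≤ j} = Set.univ := by
      ext α; simp
    rw [cle, h, Set.ncard_univ, Nat.card_unique, Nat.choose_zero_right]
  | succ d ih =>
    intro j
    induction j with
    | zero =>
      have h : {α : Fin (d+1) → ℕ | (∑ i, α i) ≤ 0} = {fun _ => 0} := by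
        ext α
        simp [Finset.sum_eq_zero_iff, funext_iff]
      rw [cle, h, Set.ncard_singleton, Nat.zero_add, Nat.choose_self]
    | succ j ihj =>
      have hconsinj : Function.Injective (fun β : Fin d → ℕ => (Fin.cons 0 β : Fin (d+1) → ℕ)) := by
        intro β β' h
        have := congrArg Fin.tail h
        simpa [Fin.tail_cons] using this
      have hpsiinj : Function.Injective
          (fun α : Fin (d+1) → ℕ => Fin.cons (α 0 + 1) (Fin.tail α)) := by
        intro α α' h
        have h0 := congrFun h 0
        simp only [Fin.cons_zero] at h0
        have ht := congrArg Fin.tail h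
        simp only [Fin.tail_cons] at ht
        have : α = Fin.cons (α 0) (Fin.tail α) := (Fin.cons_self_tail α).symm
        rw [this, Nat.succ_injective h0, ht, Fin.cons_self_tail]
      set A0 : Set (Fin (d+1) → ℕ) :=
        (fun β : Fin d → ℕ => Fin.cons 0 β) '' {β : Fin d → ℕ | (∑ i, β i) ≤ j+1} with hA0
      set A1 : Set (Fin (d+1) → ℕ) :=
        (fun α : Fin (d+1) → ℕ => Fin.cons (α 0 + 1) (Fin.tail α)) ''
          {α : Fin (d+1) → ℕ | (∑ i, α i) ≤ j} with hA1
      have hsum : ∀ α : Fin (d+1) → ℕ, (∑ i, α i) = α 0 + ∑ i, Fin.tail α i := by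
        intro α; rw [Fin.sum_univ_succ]; rfl
      have hunion : {α : Fin (d+1) → ℕ | (∑ i, α i) ≤ j+1} = A0 ∪ A1 := by
        ext α
        simp only [Set.mem_setOf_eq, Set.mem_union, hA0, hA1, Set.mem_image]
        constructor
        · intro hα
          rcases Nat.eq_zero_or_pos (α 0) with h0 | h0
          · left
            refine ⟨Fin.tail α, ?_, by rw [← h0, Fin.cons_self_tail]⟩
            have := hsum α
            omega
          · right
            refine ⟨Fin.cons (α 0 - 1) (Fin.tail α), ?_, ?_⟩
            · show (∑ i, (Fin.cons (α 0 - 1) (Fin.tail α) : Fin (d+1) → ℕ) i) ≤ j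
              rw [hsum]
              simp only [Fin.cons_zero, Fin.tail_cons]
              have := hsum α
              omega
            · simp only [Fin.cons_zero, Fin.tail_cons]
              have he : α 0 - 1 + 1 = α 0 := by omega
              rw [he, Fin.cons_self_tail]
        · rintro (⟨β, hβ, rfl⟩ | ⟨γ, hγ, rfl⟩)
          · rw [hsum]
            simp only [Fin.cons_zero, Fin.tail_cons]
            omega
          · rw [hsum]
            simp only [Fin.cons_zero, Fin.tail_cons]
            have := hsum γ
            omega
      have hdisj : Disjoint A0 A1 := by
        rw [Set.disjoint_left]
        rintro x ⟨β, -, rfl⟩ ⟨γ, -, hγ⟩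
        have := congrFun hγ 0
        simp only [Fin.cons_zero] at this
        omega
      have hfin : {α : Fin (d+1) → ℕ | (∑ i, α i) ≤ j+1}.Finite := finite_sum_le _ _
      have hf0 : A0.Finite := hfin.subset (by rw [hunion]; exact Set.subset_union_left)
      have hf1 : A1.Finite := hfin.subset (by rw [hunion]; exact Set.subset_union_right)
      have hcard : cle (d+1) (j+1) = cle d (j+1) + cle (d+1) j := by
        rw [cle, hunion, Set.ncard_union_eq hdisj hf0 hf1, cle, cle,
          Set.ncard_image_of_injective _ hconsinj, Set.ncard_image_of_injective _ hpsiinj]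
      rw [hcard, ih (j+1), ihj]
      have h1 : (j + 1 + (d + 1)) = (j + d + 1) + 1 := by omega
      have h2 : (j + 1 + d) = j + d + 1 := by omega
      have h3 : (j + (d + 1)) = j + d + 1 := by omega
      rw [h1, h2, h3, Nat.choose_succ_succ (j + d + 1) d]

lemma cle_mono (d : ℕ) : Monotone (cle d) := by
  intro a b hab
  apply Set.ncard_le_ncard ?_ (finite_sum_le d b)
  intro α hα
  simp only [Set.mem_setOf_eq] at hα ⊢
  omega

lemma rank_lt_cle (α : Fin d → ℕ) : monRank d α < cle d (∑ i, α i) := by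
  have hsub : insert α {β | degLexLt β α} ⊆ {β : Fin d → ℕ | (∑ i, β i) ≤ ∑ i, α i} := by
    rintro β (rfl | hβ)
    · show (∑ i, β i) ≤ ∑ i, β i
      exact le_refl _
    · show (∑ i, β i) ≤ ∑ i, α i
      exact sum_le_of_lt hβ
  have hnm : α ∉ {β | degLexLt β α} := irrefl α
  have h1 : monRank d α + 1 ≤ cle d (∑ i, α i) := by
    rw [monRank_eq, ← Set.ncard_insert_of_notMem hnm (finite_down α)]
    exact Set.ncard_le_ncard hsub (finite_sum_le d _)
  omega

lemma cle_le_rank {α : Fin d → ℕ} {j : ℕ} (h : j < ∑ i, α i) :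
    cle d j ≤ monRank d α := by
  rw [monRank_eq]
  apply Set.ncard_le_ncard _ (finite_down α)
  intro β hβ
  exact Or.inl (lt_of_le_of_lt hβ h)

lemma bridge (hd : 1 ≤ d) (i j : ℕ) :
    j < (∑ k, monExp d i k) ↔ cle d j ≤ i := by
  constructor
  · intro h
    have := cle_le_rank (α := monExp d i) h
    rwa [monRank_monExp hd] at this
  · intro h
    by_contra hc
    push_neg at hc
    have h1 : cle d (∑ k, monExp d i k) ≤ cle d j := cle_mono d hc
    have h2 := rank_lt_cle (monExp d i)
    rw [monRank_monExp hd] at h2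
    omega

lemma sum_choose_eq (d k : ℕ) :
    ∑ j ∈ Finset.range k, (j + d).choose d = (k + d).choose (d + 1) := by
  induction k with
  | zero =>
    simp [Nat.choose_eq_zero_of_lt (Nat.lt_succ_self d)]
  | succ k ih =>
    rw [Finset.sum_range_succ, ih]
    have h1 : (k + 1 + d) = (k + d) + 1 := by omega
    rw [h1, Nat.choose_succ_succ (k + d) d, Nat.add_comm]

lemma sum_tDeg (hd : 1 ≤ d) (N k : ℕ) (h1 : N ≤ (k + d).choose d)
    (h2 : ∀ j, j < k → (j + d).choose d < N) :
    (∑ i ∈ Finset.range N, ∑ kk, monExp d i kk) + (k + d).choose (d + 1) = k * N := by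
  have hcle : ∀ j, cle d j = (j + d).choose d := cle_eq d
  have htle : ∀ i, i < N → (∑ kk, monExp d i kk) ≤ k := by
    intro i hi
    by_contra hc
    push_neg at hc
    have := (bridge hd i k).mp hc
    rw [hcle] at this
    omega
  have hstep : ∀ i ∈ Finset.range N, (∑ kk, monExp d i kk) =
      ∑ j ∈ Finset.range k, (if cle d j ≤ i then 1 else 0) := by
    intro i hi
    rw [Finset.mem_range] at hi
    have hfilter : Finset.filter (fun j => j < (∑ kk, monExp d i kk)) (Finset.range k)
        = Finset.range (∑ kk, monExp d i kk) := by
      ext j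
      simp only [Finset.mem_filter, Finset.mem_range]
      have := htle i hi
      omega
    calc (∑ kk, monExp d i kk) = (Finset.filter (fun j => j < (∑ kk, monExp d i kk))
          (Finset.range k)).card := by rw [hfilter, Finset.card_range]
      _ = ∑ j ∈ Finset.range k, (if j < (∑ kk, monExp d i kk) then 1 else 0) := by
          rw [Finset.card_filter]
      _ = ∑ j ∈ Finset.range k, (if cle d j ≤ i then 1 else 0) := by
          apply Finset.sum_congr rfl
          intro j hj
          congr 1
          simp only [eq_iff_iff]
          exact bridge hd i j
  rw [Finset.sum_congr rfl hstep, Finset.sum_comm]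
  have hinner : ∀ j ∈ Finset.range k,
      (∑ i ∈ Finset.range N, (if cle d j ≤ i then 1 else 0)) = N - cle d j := by
    intro j hj
    rw [Finset.mem_range] at hj
    rw [← Finset.card_filter]
    have : Finset.filter (fun i => cle d j ≤ i) (Finset.range N) = Finset.Ico (cle d j) N := by
      ext i
      simp only [Finset.mem_filter, Finset.mem_range, Finset.mem_Ico]
      omega
    rw [this, Nat.card_Ico]
  rw [Finset.sum_congr rfl hinner, ← sum_choose_eq d k]
  have hlt : ∀ j, j < k → cle d j < N := by
    intro j hj; rw [hcle]; exact h2 j hj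
  have : (∑ j ∈ Finset.range k, (N - cle d j)) + ∑ j ∈ Finset.range k, (j + d).choose d
      = ∑ j ∈ Finset.range k, N := by
    rw [← Finset.sum_add_distrib]
    apply Finset.sum_congr rfl
    intro j hj
    rw [Finset.mem_range] at hj
    have hx := hlt j hj
    rw [hcle] at hx ⊢
    omega
  rw [this, Finset.sum_const, Finset.card_range, smul_eq_mul, Nat.mul_comm]

end DegLex
namespace DegLex

open MvPolynomial

def EE (d N : ℕ) (σ : Equiv.Perm (Fin N)) : (Fin N × Fin d) →₀ ℕ :=
  Finsupp.equivFunOnFinite.symm (fun p => monExp d ((σ p.1 : Fin N) : ℕ) p.2)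

lemma EE_apply (d N : ℕ) (σ : Equiv.Perm (Fin N)) (p : Fin N × Fin d) :
    EE d N σ p = monExp d ((σ p.1 : Fin N) : ℕ) p.2 := rfl

lemma EE_injective (d N : ℕ) (hd : 1 ≤ d) : Function.Injective (EE d N) := by
  intro σ τ h
  ext i
  have h1 : ∀ p : Fin N × Fin d, monExp d ((σ p.1 : Fin N) : ℕ) p.2
      = monExp d ((τ p.1 : Fin N) : ℕ) p.2 := by
    intro p
    rw [← EE_apply d N σ p, ← EE_apply d N τ p, h]
  have h2 : monExp d ((σ i : Fin N) : ℕ) = monExp d ((τ i : Fin N) : ℕ) :=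
    funext fun k => h1 (i, k)
  exact monExp_injective hd h2

lemma prod_entry (d N : ℕ) (σ : Equiv.Perm (Fin N)) :
    (∏ i : Fin N, ∏ k : Fin d,
      (X (i, k) : MvPolynomial (Fin N × Fin d) ℝ) ^ monExp d ((σ i : Fin N) : ℕ) k)
    = monomial (EE d N σ) 1 := by
  rw [monomial_eq, C_1, one_mul]
  rw [Finsupp.prod_fintype]
  · rw [Fintype.prod_prod_type]
    rfl
  · intro p
    exact pow_zero _

lemma psi_eq (d N : ℕ) : psi d N
    = ∑ σ : Equiv.Perm (Fin N), Equiv.Perm.sign σ • (monomial (EE d N σ) (1 : ℝ)) := by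
  rw [psi, Matrix.det_apply]
  apply Finset.sum_congr rfl
  intro σ _
  rw [← prod_entry d N σ]
  rfl

lemma EE_weight (d N : ℕ) (σ : Equiv.Perm (Fin N)) :
    ((EE d N σ).sum fun _ e => e) = ∑ i ∈ Finset.range N, ∑ k, monExp d i k := by
  rw [Finsupp.sum_fintype _ _ (fun _ => rfl)]
  have h1 : (∑ p : Fin N × Fin d, EE d N σ p)
      = ∑ i : Fin N, ∑ k : Fin d, monExp d ((σ i : Fin N) : ℕ) k := by
    rw [Fintype.sum_prod_type]
    rfl
  rw [h1]
  rw [Equiv.sum_comp σ (fun i : Fin N => ∑ k : Fin d, monExp d (i : ℕ) k)]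
  rw [← Fin.sum_univ_eq_sum_range (fun i => ∑ k : Fin d, monExp d i k) N]

lemma degV_eq_sum (d N : ℕ) (hd : 1 ≤ d) :
    degV d N = ∑ i ∈ Finset.range N, ∑ k, monExp d i k := by
  set Dtot := ∑ i ∈ Finset.range N, ∑ k, monExp d i k with hD
  apply le_antisymm
  · rw [degV, psi_eq]
    apply le_trans (totalDegree_finset_sum _ _)
    apply Finset.sup_le
    intro σ _
    apply le_trans (totalDegree_smul_le _ _)
    rw [totalDegree_monomial _ (one_ne_zero)]
    rw [EE_weight]
  · have hcoeff : coeff (EE d N 1) (psi d N) = 1 := by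
      rw [psi_eq, coeff_sum]
      rw [Finset.sum_eq_single (1 : Equiv.Perm (Fin N))]
      · rw [coeff_smul, coeff_monomial, if_pos rfl, Equiv.Perm.sign_one, one_smul]
      · intro σ _ hσ
        rw [coeff_smul, coeff_monomial, if_neg (fun hc => hσ (EE_injective d N hd hc)),
          smul_zero]
      · intro h
        exact absurd (Finset.mem_univ _) h
    have hmem : EE d N 1 ∈ (psi d N).support := by
      rw [mem_support_iff, hcoeff]
      exact one_ne_zero
    have := le_totalDegree hmem
    rwa [EE_weight] at this

end DegLex
namespace DegLex

open Real intervalIntegral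

lemma log_eq_integral {x : ℝ} (hx : 1 ≤ x) : Real.log x = ∫ t in (1:ℝ)..x, t⁻¹ := by
  rw [integral_inv, div_one]
  rw [Set.uIcc_of_le hx]
  intro h
  have := h.1
  linarith

lemma integrable_inv_on {x : ℝ} (hx : 1 ≤ x) :
    IntervalIntegrable (fun t : ℝ => t⁻¹) MeasureTheory.volume 1 x := by
  apply intervalIntegrable_inv
  · intro t ht
    rw [Set.uIcc_of_le hx] at ht
    have := ht.1
    intro hc
    rw [hc] at this
    linarith
  · exact continuousOn_id

lemma log_le_half_sub {x : ℝ} (hx : 1 ≤ x) : Real.log x ≤ (x - 1/x) / 2 := by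
  have hx0 : (0:ℝ) < x := lt_of_lt_of_le one_pos hx
  rw [log_eq_integral hx]
  have h2 : (∫ t in (1:ℝ)..x, (1 + (t:ℝ)^(-2 : ℤ))/2) = (x - 1/x)/2 := by
    rw [intervalIntegral.integral_div]
    rw [intervalIntegral.integral_add intervalIntegrable_const]
    · rw [intervalIntegral.integral_const, integral_zpow]
      · norm_num
        ring
      · right
        constructor
        · norm_num
        · rw [Set.uIcc_of_le hx]
          intro h
          have := h.1
          linarith
    · apply intervalIntegrable_zpow
      right
      rw [Set.uIcc_of_le hx]
      intro h
      have := h.1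
      linarith
  rw [← h2]
  apply intervalIntegral.integral_mono_on hx (integrable_inv_on hx)
  · apply IntervalIntegrable.div_const
    apply IntervalIntegrable.add intervalIntegrable_const
    apply intervalIntegrable_zpow
    right
    rw [Set.uIcc_of_le hx]
    intro h
    have := h.1
    linarith
  · intro t ht
    have ht1 : (1:ℝ) ≤ t := ht.1
    have ht0 : (0:ℝ) < t := lt_of_lt_of_le one_pos ht1
    have he2 : (t:ℝ)^(-2:ℤ) = (t^2)⁻¹ := by
      rw [zpow_neg, show ((2:ℤ)) = ((2:ℕ):ℤ) from rfl, zpow_natCast]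
    rw [← sub_nonneg, he2]
    have he : (1 + ((t:ℝ)^2)⁻¹)/2 - t⁻¹ = (t-1)^2/(2*t^2) := by
      field_simp
      ring
    rw [he]
    positivity
  
lemma log_ge_sub_half_sq {u : ℝ} (hu : 0 ≤ u) : u - u^2/2 ≤ Real.log (1 + u) := by
  have hx : (1:ℝ) ≤ 1 + u := by linarith
  rw [log_eq_integral hx]
  have h2 : (∫ t in (1:ℝ)..(1+u), (2 - t)) = u - u^2/2 := by
    have hgi : IntervalIntegrable (fun t : ℝ => t) MeasureTheory.volume 1 (1+u) :=
      Continuous.intervalIntegrable (by continuity) 1 (1+u)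
    rw [intervalIntegral.integral_sub intervalIntegrable_const hgi,
      intervalIntegral.integral_const, integral_id]
    simp only [smul_eq_mul]
    ring
  rw [← h2]
  apply intervalIntegral.integral_mono_on hx _ (integrable_inv_on hx)
  · intro t ht
    have ht1 : (1:ℝ) ≤ t := ht.1
    have ht0 : (0:ℝ) < t := lt_of_lt_of_le one_pos ht1
    rw [← sub_nonneg]
    have : t⁻¹ - (2 - t) = (t-1)^2 / t := by field_simp; ring
    rw [this]
    positivity
  · exact (continuous_const.sub continuous_id).intervalIntegrable _ _

/-- The key per-factor estimate for the Cartwright–Field type bound. -/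
lemma factor_bound {K A z : ℝ} (hK : 0 < K) (hKA : K ≤ A) (hKz : K ≤ z) :
    Real.log A + (z - A)/A - (z - A)^2/(2*A*K) ≤ Real.log z := by
  have hA : (0:ℝ) < A := lt_of_lt_of_le hK hKA
  have hz : (0:ℝ) < z := lt_of_lt_of_le hK hKz
  rcases le_total A z with hAz | hAz
  · -- z ≥ A
    have hu : (0:ℝ) ≤ (z - A)/A := div_nonneg (by linarith) hA.le
    have h1 : (z-A)/A - ((z-A)/A)^2/2 ≤ Real.log (1 + (z-A)/A) := log_ge_sub_half_sq hu
    have h2 : (1 : ℝ) + (z-A)/A = z/A := by field_simp; ring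
    rw [h2, Real.log_div (ne_of_gt hz) (ne_of_gt hA)] at h1
    have h3 : ((z-A)/A)^2/2 = (z-A)^2/(2*A^2) := by ring
    have h4 : (z-A)^2/(2*A^2) ≤ (z-A)^2/(2*A*K) := by
      apply div_le_div_of_nonneg_left (sq_nonneg _)
      · positivity
      · nlinarith
    rw [h3] at h1
    linarith
  · -- z ≤ A
    have hρ : (1:ℝ) ≤ A/z := (one_le_div hz).mpr hAz
    have h1 : Real.log (A/z) ≤ (A/z - 1/(A/z))/2 := log_le_half_sub hρ
    rw [Real.log_div (ne_of_gt hA) (ne_of_gt hz)] at h1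
    have h2 : (A/z - 1/(A/z))/2 = (A-z)*(A+z)/(2*A*z) := by
      field_simp
      ring
    rw [h2] at h1
    have h5 : (z-A)/A = -((A-z)/A) := by ring
    -- goal: log A + (z-A)/A - (z-A)^2/(2AK) ≤ log z
    -- from h1: log A - log z ≤ (A-z)(A+z)/(2Az)
    -- suffices (A-z)(A+z)/(2Az) ≤ (A-z)/A + (A-z)^2/(2AK)
    have h3 : (A-z)*(A+z)/(2*A*z) ≤ (A-z)/A + (z-A)^2/(2*A*K) := by
      rw [div_add_div _ _ (ne_of_gt hA) (by positivity), div_le_div_iff₀ (by positivity) (by positivity)]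
      have hw : 0 ≤ A - z := by linarith
      nlinarith [mul_nonneg (mul_nonneg (mul_nonneg (sq_nonneg (A-z)) hz.le) hA.le) (sub_nonneg.mpr hKz), sq_nonneg (A-z), mul_pos hA hz, mul_pos (mul_pos hA hz) hK]
    linarith

end DegLex
namespace DegLex

open Real

lemma sum_range_cast (d : ℕ) : ∑ i ∈ Finset.range d, (i:ℝ) = d*((d:ℝ)-1)/2 := by
  induction d with
  | zero => simp
  | succ d ih =>
    rw [Finset.sum_range_succ, ih]
    push_cast
    ring

lemma sum_range_sq_cast (d : ℕ) :
    ∑ i ∈ Finset.range d, (i:ℝ)^2 = d*((d:ℝ)-1)*(2*(d:ℝ)-1)/6 := by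
  induction d with
  | zero => simp
  | succ d ih =>
    rw [Finset.sum_range_succ, ih]
    push_cast
    ring

lemma log_le_affine {z A : ℝ} (hz : 0 < z) (hA : 0 < A) :
    Real.log z ≤ Real.log A + (z - A)/A := by
  have h := Real.log_le_sub_one_of_pos (show (0:ℝ) < z/A by positivity)
  rw [Real.log_div (ne_of_gt hz) (ne_of_gt hA)] at h
  have h2 : z/A - 1 = (z - A)/A := by field_simp
  rw [h2] at h
  linarith

section GM

variable (d k : ℕ)

lemma natprod_pos (hk : 1 ≤ k) : 0 < ((∏ i ∈ Finset.range d, (k+i) : ℕ) : ℝ) := by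
  have h : 0 < ∏ i ∈ Finset.range d, (k+i) := Finset.prod_pos (fun i _ => by omega)
  exact_mod_cast h

lemma log_natprod (hk : 1 ≤ k) :
    Real.log ((∏ i ∈ Finset.range d, (k+i) : ℕ) : ℝ)
      = ∑ i ∈ Finset.range d, Real.log ((k:ℝ) + (i:ℝ)) := by
  rw [Nat.cast_prod, Real.log_prod]
  · apply Finset.sum_congr rfl
    intro i _
    push_cast
    rfl
  · intro i _
    have h : (0:ℝ) < ((k+i : ℕ):ℝ) := by exact_mod_cast Nat.pos_of_ne_zero (by omega)
    exact ne_of_gt h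

lemma sum_kplusi (hd : 1 ≤ d) :
    ∑ i ∈ Finset.range d, ((k:ℝ) + (i:ℝ)) = d * ((k:ℝ) + ((d:ℝ)-1)/2) := by
  rw [Finset.sum_add_distrib, Finset.sum_const, Finset.card_range, sum_range_cast,
    nsmul_eq_mul]
  ring

lemma log_prod_le (hd : 1 ≤ d) (hk : 1 ≤ k) :
    Real.log ((∏ i ∈ Finset.range d, (k+i) : ℕ) : ℝ)
      ≤ d * Real.log ((k:ℝ) + ((d:ℝ)-1)/2) := by
  have hk0 : (1:ℝ) ≤ (k:ℝ) := by exact_mod_cast hk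
  have hd0 : (1:ℝ) ≤ (d:ℝ) := by exact_mod_cast hd
  set A : ℝ := (k:ℝ) + ((d:ℝ)-1)/2 with hAdef
  have hA : (0:ℝ) < A := by rw [hAdef]; nlinarith
  rw [log_natprod d k hk]
  have h1 : ∀ i ∈ Finset.range d, Real.log ((k:ℝ) + (i:ℝ))
      ≤ Real.log A + (((k:ℝ)+(i:ℝ)) - A)/A := by
    intro i _
    apply log_le_affine _ hA
    have h : (0:ℝ) ≤ (i:ℝ) := Nat.cast_nonneg i
    nlinarith
  apply le_trans (Finset.sum_le_sum h1)
  have h3 : ∑ i ∈ Finset.range d, ((((k:ℝ)+(i:ℝ)) - A)/A) = 0 := by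
    rw [← Finset.sum_div, Finset.sum_sub_distrib, sum_kplusi d k hd, Finset.sum_const,
      Finset.card_range, nsmul_eq_mul, sub_self, zero_div]
  rw [Finset.sum_add_distrib, Finset.sum_const, Finset.card_range, nsmul_eq_mul, h3, add_zero]

lemma log_prod_ge (hd : 1 ≤ d) (hk : 1 ≤ k) :
    d * Real.log ((k:ℝ) + ((d:ℝ)-1)/2)
        - (d:ℝ)*((d:ℝ)^2-1)/12/(2*((k:ℝ) + ((d:ℝ)-1)/2)*(k:ℝ))
      ≤ Real.log ((∏ i ∈ Finset.range d, (k+i) : ℕ) : ℝ) := by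
  have hk0 : (1:ℝ) ≤ (k:ℝ) := by exact_mod_cast hk
  have hd0 : (1:ℝ) ≤ (d:ℝ) := by exact_mod_cast hd
  set A : ℝ := (k:ℝ) + ((d:ℝ)-1)/2 with hAdef
  have hA : (0:ℝ) < A := by rw [hAdef]; nlinarith
  have hKA : (k:ℝ) ≤ A := by rw [hAdef]; nlinarith
  rw [log_natprod d k hk]
  have h1 : ∀ i ∈ Finset.range d,
      Real.log A + (((k:ℝ)+(i:ℝ)) - A)/A - (((k:ℝ)+(i:ℝ)) - A)^2/(2*A*(k:ℝ))
        ≤ Real.log ((k:ℝ) + (i:ℝ)) := by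
    intro i _
    apply factor_bound (by linarith) hKA
    have h : (0:ℝ) ≤ (i:ℝ) := Nat.cast_nonneg i
    linarith
  have h3 : ∑ i ∈ Finset.range d, ((((k:ℝ)+(i:ℝ)) - A)/A) = 0 := by
    rw [← Finset.sum_div, Finset.sum_sub_distrib, sum_kplusi d k hd, Finset.sum_const,
      Finset.card_range, nsmul_eq_mul, sub_self, zero_div]
  have h4 : ∑ i ∈ Finset.range d, ((((k:ℝ)+(i:ℝ)) - A)^2/(2*A*(k:ℝ)))
      = (d:ℝ)*((d:ℝ)^2-1)/12/(2*A*(k:ℝ)) := by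
    rw [← Finset.sum_div]
    congr 1
    have h5 : ∀ i ∈ Finset.range d, (((k:ℝ)+(i:ℝ)) - A)^2 = ((i:ℝ) - ((d:ℝ)-1)/2)^2 := by
      intro i _
      rw [hAdef]
      ring
    rw [Finset.sum_congr rfl h5]
    have h6 : ∀ i ∈ Finset.range d, ((i:ℝ) - ((d:ℝ)-1)/2)^2
        = (i:ℝ)^2 - ((d:ℝ)-1)*(i:ℝ) + (((d:ℝ)-1)/2)^2 := fun i _ => by ring
    rw [Finset.sum_congr rfl h6, Finset.sum_add_distrib, Finset.sum_sub_distrib,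
      ← Finset.mul_sum, sum_range_sq_cast, sum_range_cast, Finset.sum_const,
      Finset.card_range, nsmul_eq_mul]
    ring
  calc (d:ℝ) * Real.log A - (d:ℝ)*((d:ℝ)^2-1)/12/(2*A*(k:ℝ))
      = ∑ i ∈ Finset.range d, (Real.log A + (((k:ℝ)+(i:ℝ)) - A)/A
          - (((k:ℝ)+(i:ℝ)) - A)^2/(2*A*(k:ℝ))) := by
        rw [Finset.sum_sub_distrib, Finset.sum_add_distrib, h3, h4, Finset.sum_const,
          Finset.card_range, nsmul_eq_mul, add_zero]
    _ ≤ _ := Finset.sum_le_sum h1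

lemma gm_le (hd : 1 ≤ d) (hk : 1 ≤ k) :
    ((∏ i ∈ Finset.range d, (k+i) : ℕ) : ℝ) ^ ((1:ℝ)/(d:ℝ))
      ≤ (k:ℝ) + ((d:ℝ)-1)/2 := by
  have hk0 : (1:ℝ) ≤ (k:ℝ) := by exact_mod_cast hk
  have hd0 : (1:ℝ) ≤ (d:ℝ) := by exact_mod_cast hd
  have hP := natprod_pos d k hk
  have hA : (0:ℝ) < (k:ℝ) + ((d:ℝ)-1)/2 := by nlinarith
  rw [Real.rpow_def_of_pos hP, ← Real.exp_log hA]
  apply Real.exp_le_exp.mpr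
  rw [mul_one_div, div_le_iff₀ (by linarith : (0:ℝ) < (d:ℝ))]
  have h := log_prod_le d k hd hk
  linarith [h]

lemma gm_ge (hd : 1 ≤ d) (hk : 1 ≤ k) :
    ((k:ℝ) + ((d:ℝ)-1)/2) - ((d:ℝ)^2-1)/(24*(k:ℝ))
      ≤ ((∏ i ∈ Finset.range d, (k+i) : ℕ) : ℝ) ^ ((1:ℝ)/(d:ℝ)) := by
  have hk0 : (1:ℝ) ≤ (k:ℝ) := by exact_mod_cast hk
  have hd0 : (1:ℝ) ≤ (d:ℝ) := by exact_mod_cast hd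
  have hP := natprod_pos d k hk
  set A : ℝ := (k:ℝ) + ((d:ℝ)-1)/2 with hAdef
  have hA : (0:ℝ) < A := by rw [hAdef]; nlinarith
  have hkne : ((k:ℝ)) ≠ 0 := by positivity
  have hAne : A ≠ 0 := hA.ne'
  set x : ℝ := ((d:ℝ)^2-1)/(24*(k:ℝ)*A) with hxdef
  have hx0 : 0 ≤ x := by
    rw [hxdef]
    apply div_nonneg _ (by positivity)
    nlinarith
  have hstep1 : A - ((d:ℝ)^2-1)/(24*(k:ℝ)) = A * (1 - x) := by
    rw [hxdef]
    field_simp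
  rw [hstep1, Real.rpow_def_of_pos hP]
  have hstep2 : A * (1 - x) ≤ A * Real.exp (-x) := by
    apply mul_le_mul_of_nonneg_left _ hA.le
    have := Real.add_one_le_exp (-x)
    linarith
  apply le_trans hstep2
  rw [← Real.exp_log hA, ← Real.exp_add]
  apply Real.exp_le_exp.mpr
  have h := log_prod_ge d k hd hk
  rw [mul_one_div, le_div_iff₀ (by linarith : (0:ℝ) < (d:ℝ))]
  have hxx : (d:ℝ)*((d:ℝ)^2-1)/12/(2*A*(k:ℝ)) = (d:ℝ) * x := by
    rw [hxdef, div_div, ← mul_div_assoc]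
    have h12 : 12*(2*A*(k:ℝ)) = 24*(k:ℝ)*A := by ring
    rw [h12]
  rw [hxx] at h
  nlinarith [h]

end GM
end DegLex
namespace DegLex

lemma ascFactorial_prod (n : ℕ) : ∀ t : ℕ, n.ascFactorial t = ∏ i ∈ Finset.range t, (n + i)
  | 0 => by simp
  | (t+1) => by
      rw [Nat.ascFactorial_succ, Finset.prod_range_succ, ascFactorial_prod n t, Nat.mul_comm]

lemma factorial_mul_choose (j d : ℕ) :
    d.factorial * (j + d).choose d = ∏ i ∈ Finset.range d, (j + 1 + i) := by
  rw [← ascFactorial_prod, Nat.ascFactorial_eq_factorial_mul_choose]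

/-- Breakpoint inequality: `ξ_d(M_j) ≤ j·M_j − C(j+d, d+1)`. -/
lemma breakpoint (d j : ℕ) (hd : 1 ≤ d) :
    xi d ((j + d).choose d) ≤ (j:ℝ) * ((j + d).choose d : ℝ) - ((j + d).choose (d+1) : ℝ) := by
  have hM1 : 1 ≤ (j + d).choose d := Nat.choose_pos (by omega)
  set Mr : ℝ := ((j + d).choose d : ℝ) with hMr
  have hMpos : (0:ℝ) < Mr := by rw [hMr]; exact_mod_cast hM1
  have hD0 : (0:ℝ) < (d:ℝ) := by exact_mod_cast hd
  have hD1 : (0:ℝ) < (d:ℝ) + 1 := by linarith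
  have hQn : ((j+d).choose (d+1)) * (d+1) = (j+d).choose d * j := by
    have h := Nat.choose_succ_right_eq (j+d) d
    have h2 : j + d - d = j := by omega
    rwa [h2] at h
  have hQR : ((j+d).choose (d+1) : ℝ) = Mr * (j:ℝ) / ((d:ℝ)+1) := by
    rw [eq_div_iff hD1.ne']
    rw [hMr]
    exact_mod_cast hQn
  have hprod : (d.factorial * (j + d).choose d : ℕ) = ∏ i ∈ Finset.range d, (j + 1 + i) :=
    factorial_mul_choose j d
  have hgm := gm_le d (j+1) hd (by omega)
  rw [← hprod] at hgm
  have hcast : ((d.factorial * (j + d).choose d : ℕ) : ℝ) = (d.factorial : ℝ) * Mr := by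
    rw [hMr]; push_cast; ring
  rw [hcast] at hgm
  have hj1 : ((j+1 : ℕ):ℝ) = (j:ℝ) + 1 := by push_cast; ring
  rw [hj1] at hgm
  set F : ℝ := (d.factorial : ℝ) ^ ((1:ℝ)/(d:ℝ)) with hF
  have hfacpos : (0:ℝ) < (d.factorial : ℝ) := by exact_mod_cast d.factorial_pos
  have hFpos : 0 < F := Real.rpow_pos_of_pos hfacpos _
  rw [Real.mul_rpow hfacpos.le hMpos.le] at hgm
  -- hgm : F * Mr ^ (1/d) ≤ j + 1 + (d-1)/2
  have hxi : xi d ((j + d).choose d)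
      = (d:ℝ)/((d:ℝ)+1) * F * (Mr * Mr ^ ((1:ℝ)/(d:ℝ))) - (d:ℝ)/2 * Mr := by
    rw [xi, hF]
    rw [Real.rpow_add hMpos 1 ((1:ℝ)/(d:ℝ)), Real.rpow_one]
  have hkey : (d:ℝ)/((d:ℝ)+1) * F * (Mr * Mr ^ ((1:ℝ)/(d:ℝ)))
      ≤ (d:ℝ)/((d:ℝ)+1) * Mr * ((j:ℝ) + 1 + ((d:ℝ)-1)/2) := by
    have h2 : (d:ℝ)/((d:ℝ)+1) * F * (Mr * Mr ^ ((1:ℝ)/(d:ℝ)))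
        = ((d:ℝ)/((d:ℝ)+1) * Mr) * (F * Mr ^ ((1:ℝ)/(d:ℝ))) := by ring
    rw [h2]
    apply mul_le_mul_of_nonneg_left hgm
    positivity
  rw [hxi, hQR]
  have hfinal : (d:ℝ)/((d:ℝ)+1) * Mr * ((j:ℝ)+1+((d:ℝ)-1)/2) - (d:ℝ)/2*Mr
      = (j:ℝ)*Mr - Mr*(j:ℝ)/((d:ℝ)+1) := by
    field_simp
    ring
  linarith

/-- Master polynomial inequality, case d = 2 or 3, k ≥ 2. -/
lemma master23 {D K : ℝ} (hD : D = 2 ∨ D = 3) (hK : 2 ≤ K) :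
    (D+1)*(2*K+D-1)*(K*(D+11)+D^2-1) ≤ 24*K^2*(D+1) + 6*K^2*(D-1)^2*(2*D+3) := by
  rcases hD with rfl | rfl
  · nlinarith [sq_nonneg (K-2)]
  · nlinarith [sq_nonneg (K-2)]

/-- Master polynomial inequality, case d ≥ 4, k ≥ d. -/
lemma master4 {D K : ℝ} (hD : 4 ≤ D) (hK : D ≤ K) :
    (D+1)*(2*K+D-1)*(K*(D+11)+D^2-1) ≤ 24*K^2*(D+1) + 6*K^2*(D-1)^2*(2*D+3) := by
  have hK4 : 4 ≤ K := le_trans hD hK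
  have h1 : 2*K+D-1 ≤ 3*K := by linarith
  have h2 : K*(D+11)+D^2-1 ≤ K*(2*D+11) := by nlinarith
  have hpos1 : (0:ℝ) ≤ D + 1 := by linarith
  have hpos2 : (0:ℝ) ≤ 2*K+D-1 := by linarith
  have hpos3 : (0:ℝ) ≤ K*(D+11)+D^2-1 := by nlinarith
  have h4 : (D+1)*(2*K+D-1)*(K*(D+11)+D^2-1) ≤ (D+1)*(3*K)*(K*(2*D+11)) := by
    apply mul_le_mul _ h2 hpos3 (by positivity)
    apply mul_le_mul_of_nonneg_left h1 hpos1
  apply le_trans h4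
  have hcoef : 3*(D+1)*(2*D+11) ≤ 24*(D+1) + 6*(D-1)^2*(2*D+3) := by
    nlinarith [sq_nonneg (D-4), sq_nonneg D]
  nlinarith [mul_le_mul_of_nonneg_left hcoef (sq_nonneg K)]

/-- Small-k condition implies the AM-GM case condition (cleared form). -/
lemma small_cond1 {D : ℝ} (hD : 2 ≤ D) :
    ((D+1)*(2*1+D))^2 ≤ 8*D^2*(D+1) + 2*D^2*(D-1)^2*(2*D+3) := by
  nlinarith [sq_nonneg (D-2), sq_nonneg D, sq_nonneg (D+1), sq_nonneg (D*(D-2))]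

lemma small_cond2 {D K : ℝ} (hD : 4 ≤ D) (hK1 : 1 ≤ K) (hKD : K ≤ D) :
    ((D+1)*(2*K+D))^2 ≤ 8*D^2*(D+1) + 2*D^2*(D-1)^2*(2*D+3) := by
  have h1 : (D+1)*(2*K+D) ≤ (D+1)*(3*D) := by nlinarith
  have h0 : (0:ℝ) ≤ (D+1)*(2*K+D) := by nlinarith
  have h2 : ((D+1)*(2*K+D))^2 ≤ ((D+1)*(3*D))^2 := by nlinarith
  apply le_trans h2
  nlinarith [sq_nonneg (D-4), sq_nonneg D, sq_nonneg (D-1), sq_nonneg (D*(D-4))]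

end DegLex
namespace DegLex

set_option maxHeartbeats 1000000 in
/-- Lower bound: on the block `(m, M]` with slope `k`, the affine function majorises `ξ`. -/
lemma lower_bound (d N k : ℕ) (hd : 1 ≤ d) (hk1 : 1 ≤ k)
    (h1 : N ≤ (k + d).choose d) (hm : (k - 1 + d).choose d < N) :
    0 ≤ ((k:ℝ)*(N:ℝ) - ((k + d).choose (d+1) : ℝ)) - xi d N := by
  have hD0 : (0:ℝ) < (d:ℝ) := by exact_mod_cast hd
  have hD1 : (0:ℝ) < (d:ℝ) + 1 := by linarith
  set K : ℝ := (k:ℝ) with hK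
  set NR : ℝ := (N:ℝ) with hNR
  set mR : ℝ := ((k - 1 + d).choose d : ℝ) with hmR
  set MR : ℝ := ((k + d).choose d : ℝ) with hMR
  set QR : ℝ := ((k + d).choose (d+1) : ℝ) with hQR
  set QR' : ℝ := ((k - 1 + d).choose (d+1) : ℝ) with hQR'
  -- basic facts
  have hmN : mR + 1 ≤ NR := by
    rw [hmR, hNR]; exact_mod_cast hm
  have hNM : NR ≤ MR := by rw [hNR, hMR]; exact_mod_cast h1
  have hm0 : (0:ℝ) ≤ mR := by rw [hmR]; exact Nat.cast_nonneg _
  have hM0 : (0:ℝ) ≤ MR := by rw [hMR]; exact Nat.cast_nonneg _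
  have hmM : mR < MR := by linarith
  -- Pascal : Q = Q' + m
  have hQQ' : QR = QR' + mR := by
    rw [hQR, hQR', hmR]
    have h : (k + d).choose (d+1) = (k-1+d).choose d + (k-1+d).choose (d+1) := by
      have he : k + d = (k - 1 + d) + 1 := by omega
      rw [he, Nat.choose_succ_succ]
    rw [h]
    push_cast
    ring
  -- breakpoints
  have hbm := breakpoint d (k-1) hd
  have hbM := breakpoint d k hd
  have hcast1 : ((k-1 : ℕ):ℝ) = K - 1 := by
    rw [hK]
    have : (1:ℕ) ≤ k := hk1
    push_cast [this]
    ring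
  rw [hcast1] at hbm
  -- hbm : xi d m ≤ (K-1)*mR - QR'
  -- hbM : xi d M ≤ K*MR - QR
  -- convexity
  set lam : ℝ := (MR - NR)/(MR - mR) with hlam
  set mu : ℝ := (NR - mR)/(MR - mR) with hmu
  have hMm0 : (0:ℝ) < MR - mR := by linarith
  have hlam0 : 0 ≤ lam := by
    rw [hlam]; apply div_nonneg (by linarith) hMm0.le
  have hmu0 : 0 ≤ mu := by
    rw [hmu]; apply div_nonneg (by linarith) hMm0.le
  have hsum1 : lam + mu = 1 := by
    rw [hlam, hmu]
    field_simp; ring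
  have hcomb : lam * mR + mu * MR = NR := by
    rw [hlam, hmu]
    field_simp
    ring
  have hp1 : (1:ℝ) ≤ 1 + (1:ℝ)/(d:ℝ) := by
    have : (0:ℝ) < (1:ℝ)/(d:ℝ) := by positivity
    linarith
  have hconv := (convexOn_rpow (p := 1 + (1:ℝ)/(d:ℝ)) hp1).2
    (Set.mem_Ici.mpr hm0) (Set.mem_Ici.mpr hM0) hlam0 hmu0 hsum1
  simp only [smul_eq_mul] at hconv
  rw [hcomb] at hconv
  -- hconv : NR ^ p ≤ lam * mR ^ p + mu * MR ^ p
  set F : ℝ := (Nat.factorial d : ℝ) ^ ((1:ℝ)/(d:ℝ)) with hF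
  have hfacpos : (0:ℝ) < (Nat.factorial d : ℝ) := by exact_mod_cast d.factorial_pos
  have hFpos : 0 < F := Real.rpow_pos_of_pos hfacpos _
  set c : ℝ := (d:ℝ)/((d:ℝ)+1) * F with hc
  have hc0 : 0 ≤ c := by
    rw [hc]; positivity
  have hxiN : xi d N = c * NR ^ (1 + (1:ℝ)/(d:ℝ)) - (d:ℝ)/2 * NR := by rw [xi]
  have hxim : xi d ((k-1+d).choose d) = c * mR ^ (1 + (1:ℝ)/(d:ℝ)) - (d:ℝ)/2 * mR := by rw [xi]
  have hxiM : xi d ((k+d).choose d) = c * MR ^ (1 + (1:ℝ)/(d:ℝ)) - (d:ℝ)/2 * MR := by rw [xi]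
  rw [hxim] at hbm
  rw [hxiM] at hbM
  -- combine
  have h5 : c * NR ^ (1 + (1:ℝ)/(d:ℝ))
      ≤ c * (lam * mR ^ (1 + (1:ℝ)/(d:ℝ)) + mu * MR ^ (1 + (1:ℝ)/(d:ℝ))) :=
    mul_le_mul_of_nonneg_left hconv hc0
  -- xi d N ≤ lam * xi(m) + mu * xi(M) (in expression form)
  have h6 : xi d N ≤ lam * (c * mR ^ (1 + (1:ℝ)/(d:ℝ)) - (d:ℝ)/2 * mR)
      + mu * (c * MR ^ (1 + (1:ℝ)/(d:ℝ)) - (d:ℝ)/2 * MR) := by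
    rw [hxiN]
    have h7 : (d:ℝ)/2 * NR = (d:ℝ)/2 * (lam * mR + mu * MR) := by rw [hcomb]
    have hexp : lam * (c * mR ^ (1 + (1:ℝ)/(d:ℝ)) - (d:ℝ)/2 * mR)
        + mu * (c * MR ^ (1 + (1:ℝ)/(d:ℝ)) - (d:ℝ)/2 * MR)
        = c * (lam * mR ^ (1 + (1:ℝ)/(d:ℝ)) + mu * MR ^ (1 + (1:ℝ)/(d:ℝ)))
          - (d:ℝ)/2 * (lam * mR + mu * MR) := by ring
    linarith [h5]
  -- affine identity
  have h8 : K*NR - QR = lam * (K*mR - QR) + mu * (K*MR - QR) := by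
    have : lam * (K*mR - QR) + mu * (K*MR - QR)
        = K * (lam * mR + mu * MR) - (lam + mu) * QR := by ring
    rw [this, hcomb, hsum1]
    ring
  -- the two breakpoint values
  have ht1 : 0 ≤ K*mR - QR - (c * mR ^ (1 + (1:ℝ)/(d:ℝ)) - (d:ℝ)/2 * mR) := by
    have : K*mR - QR = (K-1)*mR - QR' := by rw [hQQ']; ring
    rw [this]
    linarith [hbm]
  have ht2 : 0 ≤ K*MR - QR - (c * MR ^ (1 + (1:ℝ)/(d:ℝ)) - (d:ℝ)/2 * MR) := by
    linarith [hbM]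
  have h9 : 0 ≤ lam * ((K*mR - QR) - (c * mR ^ (1 + (1:ℝ)/(d:ℝ)) - (d:ℝ)/2 * mR))
      + mu * ((K*MR - QR) - (c * MR ^ (1 + (1:ℝ)/(d:ℝ)) - (d:ℝ)/2 * MR)) :=
    add_nonneg (mul_nonneg hlam0 ht1) (mul_nonneg hmu0 ht2)
  have h10 : (K*NR - QR) - (lam * (c * mR ^ (1 + (1:ℝ)/(d:ℝ)) - (d:ℝ)/2 * mR)
        + mu * (c * MR ^ (1 + (1:ℝ)/(d:ℝ)) - (d:ℝ)/2 * MR))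
      = lam * ((K*mR - QR) - (c * mR ^ (1 + (1:ℝ)/(d:ℝ)) - (d:ℝ)/2 * mR))
        + mu * ((K*MR - QR) - (c * MR ^ (1 + (1:ℝ)/(d:ℝ)) - (d:ℝ)/2 * MR)) := by
    rw [h8]
    ring
  linarith [h6, h9, h10]

end DegLex
namespace DegLex

set_option maxHeartbeats 1000000 in
/-- Upper bound, small-`k` case (AM–GM trick). -/
lemma upper_case_a (d N k : ℕ) (hd2 : 2 ≤ d) (hN1 : 1 ≤ N)
    (hSC : (((d:ℝ)+1)*(2*(k:ℝ)+(d:ℝ)))^2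
      ≤ 8*(d:ℝ)^2*((d:ℝ)+1) + 2*(d:ℝ)^2*((d:ℝ)-1)^2*(2*(d:ℝ)+3)) :
    ((k:ℝ)*(N:ℝ) - ((k + d).choose (d+1) : ℝ)) - xi d N
      ≤ (Nat.factorial d : ℝ) ^ (-(1 : ℝ) / (d : ℝ)) *
        ((d:ℝ)/2 + (d:ℝ)*((d:ℝ)-1)^2*(2*(d:ℝ)+3)/(8*((d:ℝ)+1))) *
        (N:ℝ) ^ (1 - (1:ℝ)/(d:ℝ)) := by
  have hD2 : (2:ℝ) ≤ (d:ℝ) := by exact_mod_cast hd2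
  have hD0 : (0:ℝ) < (d:ℝ) := by linarith
  have hD1 : (0:ℝ) < (d:ℝ)+1 := by linarith
  have hN0 : (0:ℝ) < (N:ℝ) := by exact_mod_cast hN1
  have hfacpos : (0:ℝ) < (Nat.factorial d : ℝ) := by exact_mod_cast d.factorial_pos
  set F : ℝ := (Nat.factorial d : ℝ) ^ ((1:ℝ)/(d:ℝ)) with hF
  have hFpos : 0 < F := Real.rpow_pos_of_pos hfacpos _
  have hBeq : (Nat.factorial d : ℝ) ^ (-(1 : ℝ) / (d : ℝ)) = F⁻¹ := by
    rw [neg_div, Real.rpow_neg hfacpos.le, hF]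
  set RB : ℝ := (d:ℝ)/2 + (d:ℝ)*((d:ℝ)-1)^2*(2*(d:ℝ)+3)/(8*((d:ℝ)+1)) with hRB
  have hRB0 : (0:ℝ) ≤ RB := by rw [hRB]; positivity
  set c : ℝ := (d:ℝ)/((d:ℝ)+1)*F with hc
  have hc0 : (0:ℝ) < c := by rw [hc]; positivity
  set B : ℝ := F⁻¹ * RB with hB
  have hcB : c * B = (d:ℝ)*RB/((d:ℝ)+1) := by
    rw [hc, hB]
    field_simp
  have h4cb : ((k:ℝ) + (d:ℝ)/2)^2 ≤ 4*(c*B) := by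
    rw [hcB]
    have hpos : (0:ℝ) < 4*((d:ℝ)+1)^2 := by positivity
    rw [← mul_le_mul_iff_of_pos_right hpos]
    have hid : 4*((d:ℝ)*RB/((d:ℝ)+1)) * (4*((d:ℝ)+1)^2)
        = 8*(d:ℝ)^2*((d:ℝ)+1) + 2*(d:ℝ)^2*((d:ℝ)-1)^2*(2*(d:ℝ)+3) := by
      rw [hRB]
      field_simp
      ring
    have hid2 : ((k:ℝ)+(d:ℝ)/2)^2 * (4*((d:ℝ)+1)^2)
        = (((d:ℝ)+1)*(2*(k:ℝ)+(d:ℝ)))^2 := by ring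
    rw [hid, hid2]
    exact hSC
  set y : ℝ := (N:ℝ) ^ ((1:ℝ)/(d:ℝ)) with hy
  have hy0 : 0 < y := Real.rpow_pos_of_pos hN0 _
  set w : ℝ := (N:ℝ) ^ (1 - (1:ℝ)/(d:ℝ)) with hw
  have hw0 : 0 < w := Real.rpow_pos_of_pos hN0 _
  have hwy : w * y = (N:ℝ) := by
    rw [hw, hy, ← Real.rpow_add hN0]
    norm_num
  have hNp : (N:ℝ) ^ (1 + (1:ℝ)/(d:ℝ)) = w * y * y := by
    rw [Real.rpow_add hN0 1 ((1:ℝ)/(d:ℝ)), Real.rpow_one, ← hy, ← hwy]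
  have hQ0 : (0:ℝ) ≤ ((k + d).choose (d+1) : ℝ) := Nat.cast_nonneg _
  have hxiN : xi d N = c * ((N:ℝ) ^ (1 + (1:ℝ)/(d:ℝ))) - (d:ℝ)/2*(N:ℝ) := by
    rw [xi, hc, hF]
  have hmain : ((k:ℝ)*(N:ℝ) - ((k + d).choose (d+1) : ℝ)) - xi d N
      ≤ ((k:ℝ)+(d:ℝ)/2)*(N:ℝ) - c*((N:ℝ) ^ (1 + (1:ℝ)/(d:ℝ))) := by
    rw [hxiN]
    nlinarith [hQ0]
  have hpoint : ((k:ℝ)+(d:ℝ)/2)*y - c*y^2 ≤ B := by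
    nlinarith [sq_nonneg (2*c*y - ((k:ℝ)+(d:ℝ)/2)), h4cb, hc0, hy0]
  have hfinal : ((k:ℝ)+(d:ℝ)/2)*(N:ℝ) - c*((N:ℝ)^(1+(1:ℝ)/(d:ℝ))) ≤ B * w := by
    have h7 : ((k:ℝ)+(d:ℝ)/2)*(N:ℝ) - c*((N:ℝ)^(1+(1:ℝ)/(d:ℝ)))
        = w * (((k:ℝ)+(d:ℝ)/2)*y - c*y^2) := by
      rw [hNp, ← hwy]
      ring
    rw [h7]
    have h8 := mul_le_mul_of_nonneg_left hpoint hw0.le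
    linarith [h8]
  rw [hBeq]
  have hgoal : F⁻¹ * RB * w = B * w := by rw [hB]
  rw [hgoal]
  linarith [hmain, hfinal]

end DegLex
namespace DegLex

set_option maxHeartbeats 1600000 in
/-- Upper bound, large-`k` case (Cartwright–Field chain). -/
lemma upper_case_b (d N k : ℕ) (hd2 : 2 ≤ d) (hk1 : 1 ≤ k)
    (h1 : N ≤ (k + d).choose d) (hm : (k - 1 + d).choose d < N)
    (hMC : (2 ≤ k ∧ d ≤ 3) ∨ (4 ≤ d ∧ d ≤ k)) :
    ((k:ℝ)*(N:ℝ) - ((k + d).choose (d+1) : ℝ)) - xi d N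
      ≤ (Nat.factorial d : ℝ) ^ (-(1 : ℝ) / (d : ℝ)) *
        ((d:ℝ)/2 + (d:ℝ)*((d:ℝ)-1)^2*(2*(d:ℝ)+3)/(8*((d:ℝ)+1))) *
        (N:ℝ) ^ (1 - (1:ℝ)/(d:ℝ)) := by
  have hd1 : 1 ≤ d := by omega
  have hD2 : (2:ℝ) ≤ (d:ℝ) := by exact_mod_cast hd2
  have hD0 : (0:ℝ) < (d:ℝ) := by linarith
  have hD1 : (0:ℝ) < (d:ℝ)+1 := by linarith
  have hK1 : (1:ℝ) ≤ (k:ℝ) := by exact_mod_cast hk1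
  have hK0 : (0:ℝ) < (k:ℝ) := by linarith
  have hfacpos : (0:ℝ) < (Nat.factorial d : ℝ) := by exact_mod_cast d.factorial_pos
  set F : ℝ := (Nat.factorial d : ℝ) ^ ((1:ℝ)/(d:ℝ)) with hF
  have hFpos : 0 < F := Real.rpow_pos_of_pos hfacpos _
  have hBeq : (Nat.factorial d : ℝ) ^ (-(1 : ℝ) / (d : ℝ)) = F⁻¹ := by
    rw [neg_div, Real.rpow_neg hfacpos.le, hF]
  set RB : ℝ := (d:ℝ)/2 + (d:ℝ)*((d:ℝ)-1)^2*(2*(d:ℝ)+3)/(8*((d:ℝ)+1)) with hRB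
  have hRB0 : (0:ℝ) ≤ RB := by rw [hRB]; positivity
  set c : ℝ := (d:ℝ)/((d:ℝ)+1)*F with hc
  have hc0 : (0:ℝ) < c := by rw [hc]; positivity
  -- m, M, Q
  have hm1 : 1 ≤ (k - 1 + d).choose d := Nat.choose_pos (by omega)
  set mR : ℝ := ((k - 1 + d).choose d : ℝ) with hmRdef
  have hmR1 : (1:ℝ) ≤ mR := by rw [hmRdef]; exact_mod_cast hm1
  have hmpos : (0:ℝ) < mR := by linarith
  set QR : ℝ := ((k + d).choose (d+1) : ℝ) with hQRdef
  have hmN : mR + 1 ≤ (N:ℝ) := by rw [hmRdef]; exact_mod_cast hm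
  have hN0 : (0:ℝ) < (N:ℝ) := by linarith
  -- Q relation : Q*(d+1) = (k+d)*m
  have hQrel : QR * ((d:ℝ)+1) = ((k:ℝ)+(d:ℝ)) * mR := by
    rw [hQRdef, hmRdef]
    have hn : (k - 1 + d + 1) * ((k-1+d).choose d) = (k-1+d+1).choose (d+1) * (d+1) :=
      Nat.add_one_mul_choose_eq (k-1+d) d
    have he : k - 1 + d + 1 = k + d := by omega
    rw [he] at hn
    have := congrArg (fun x : ℕ => (x : ℝ)) hn
    push_cast at this
    linarith [this]
  have hQval : QR = ((k:ℝ)+(d:ℝ)) * mR / ((d:ℝ)+1) := by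
    rw [eq_div_iff hD1.ne']
    linarith [hQrel]
  -- C2 relations : M = C2 + m, m*d = C2*k
  set C2 : ℝ := ((k - 1 + d).choose (d-1) : ℝ) with hC2def
  have hMsplit : (((k + d).choose d : ℕ) : ℝ) = C2 + mR := by
    rw [hC2def, hmRdef]
    have he1 : k + d = (k - 1 + d) + 1 := by omega
    have he2 : d = (d - 1) + 1 := by omega
    have h : (k+d).choose d = (k-1+d).choose (d-1) + (k-1+d).choose d := by
      conv_lhs => rw [he1, he2]
      rw [Nat.choose_succ_succ]
      have he3 : (d-1).succ = d := by omega
      rw [he3, ← he2]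
    rw [h]
    push_cast
    ring
  have hC2rel : mR * (d:ℝ) = C2 * (k:ℝ) := by
    rw [hC2def, hmRdef]
    have h := Nat.choose_succ_right_eq (k-1+d) (d-1)
    have he2 : (d - 1) + 1 = d := by omega
    have he3 : k - 1 + d - (d-1) = k := by omega
    rw [he2, he3] at h
    have := congrArg (fun x : ℕ => (x : ℝ)) h
    push_cast at this
    linarith [this]
  have hNM : (N:ℝ) ≤ C2 + mR := by
    rw [← hMsplit]
    exact_mod_cast h1
  have hC2val : C2 = (d:ℝ)*mR/(k:ℝ) := by
    rw [eq_div_iff hK0.ne']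
    linarith [hC2rel]
  have hNm_ub : (N:ℝ) - mR ≤ (d:ℝ)*mR/(k:ℝ) := by
    rw [← hC2val]
    linarith [hNM]
  -- product and G
  have hPm : d.factorial * ((k - 1 + d).choose d) = ∏ i ∈ Finset.range d, (k+i) := by
    have h := factorial_mul_choose (k-1) d
    have he : ∀ i ∈ Finset.range d, k - 1 + 1 + i = k + i := by
      intro i _
      omega
    rw [h, Finset.prod_congr rfl he]
  have hgmle := gm_le d k hd1 hk1
  have hgmge := gm_ge d k hd1 hk1
  rw [← hPm] at hgmle hgmge
  set G : ℝ := ((d.factorial * ((k - 1 + d).choose d) : ℕ) : ℝ) ^ ((1:ℝ)/(d:ℝ)) with hGdef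
  have hGprodpos : (0:ℝ) < ((d.factorial * ((k - 1 + d).choose d) : ℕ) : ℝ) := by
    have : 0 < d.factorial * ((k - 1 + d).choose d) := Nat.mul_pos d.factorial_pos hm1
    exact_mod_cast this
  have hGpos : 0 < G := Real.rpow_pos_of_pos hGprodpos _
  set A : ℝ := (k:ℝ) + ((d:ℝ)-1)/2 with hAdef
  set eps : ℝ := ((d:ℝ)^2-1)/(24*(k:ℝ)) with hepsdef
  have heps0 : 0 ≤ eps := by
    rw [hepsdef]
    apply div_nonneg _ (by positivity)
    nlinarith
  have hGA : G ≤ A := hgmle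
  have hAG : A - eps ≤ G := hgmge
  -- mR^{1/d} = G/F
  have hcastGF : ((d.factorial * ((k - 1 + d).choose d) : ℕ) : ℝ)
      = (Nat.factorial d : ℝ) * mR := by
    rw [hmRdef]
    push_cast
    ring
  have hGm : mR ^ ((1:ℝ)/(d:ℝ)) = G / F := by
    rw [hGdef, hcastGF, Real.mul_rpow hfacpos.le hmpos.le, ← hF]
    field_simp
  have hmp : mR ^ (1 + (1:ℝ)/(d:ℝ)) = mR * (G/F) := by
    rw [Real.rpow_add hmpos 1 ((1:ℝ)/(d:ℝ)), Real.rpow_one, hGm]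
  -- Bernoulli step
  set s : ℝ := ((N:ℝ) - mR)/mR with hsdef
  have hs0 : 0 ≤ s := by
    rw [hsdef]
    apply div_nonneg (by linarith) hmpos.le
  have hp1 : (1:ℝ) ≤ 1 + (1:ℝ)/(d:ℝ) := by
    have : (0:ℝ) < (1:ℝ)/(d:ℝ) := by positivity
    linarith
  have hbern := one_add_mul_self_le_rpow_one_add (by linarith : (-1:ℝ) ≤ s) hp1
  have h1s : (1:ℝ) + s = (N:ℝ)/mR := by
    rw [hsdef]
    field_simp; ring
  have hNp : (N:ℝ) ^ (1 + (1:ℝ)/(d:ℝ))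
      = mR ^ (1 + (1:ℝ)/(d:ℝ)) * (1+s) ^ (1 + (1:ℝ)/(d:ℝ)) := by
    rw [← Real.mul_rpow hmpos.le (by linarith : (0:ℝ) ≤ 1+s)]
    congr 1
    rw [h1s]
    field_simp
  have hms : mR * s = (N:ℝ) - mR := by
    rw [hsdef]
    field_simp
  have hchain1 : c*(mR ^ (1 + (1:ℝ)/(d:ℝ))) + G*((N:ℝ)-mR) ≤ c*((N:ℝ) ^ (1 + (1:ℝ)/(d:ℝ))) := by
    have h2 : c*(mR ^ (1 + (1:ℝ)/(d:ℝ)))*(1+(1 + (1:ℝ)/(d:ℝ))*s)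
        ≤ c*(mR ^ (1 + (1:ℝ)/(d:ℝ)))*((1+s) ^ (1 + (1:ℝ)/(d:ℝ))) := by
      apply mul_le_mul_of_nonneg_left hbern
      have : (0:ℝ) < mR ^ (1 + (1:ℝ)/(d:ℝ)) := Real.rpow_pos_of_pos hmpos _
      positivity
    have h3 : c*(mR ^ (1 + (1:ℝ)/(d:ℝ)))*(1+(1 + (1:ℝ)/(d:ℝ))*s)
        = c*(mR ^ (1 + (1:ℝ)/(d:ℝ))) + G*((N:ℝ)-mR) := by
      rw [hmp, ← hms, hc]
      field_simp
    rw [h3] at h2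
    rw [hNp]
    linarith [h2]
  -- f(m) identity
  have hxiN : xi d N = c * ((N:ℝ) ^ (1 + (1:ℝ)/(d:ℝ))) - (d:ℝ)/2*(N:ℝ) := by
    rw [xi, hc, hF]
  have hfm_eq : (k:ℝ)*mR - QR - (c*(mR ^ (1 + (1:ℝ)/(d:ℝ))) - (d:ℝ)/2*mR)
      = (d:ℝ)/((d:ℝ)+1)*mR*(A - G) := by
    rw [hmp, hQval, hc, hAdef]
    field_simp
    ring
  -- main chain
  have hfN : ((k:ℝ)*(N:ℝ) - QR) - xi d N
      ≤ (d:ℝ)/((d:ℝ)+1)*mR*(A - G) + ((N:ℝ)-mR)*((k:ℝ)+(d:ℝ)/2-G) := by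
    rw [hxiN]
    have hring : ((k:ℝ)*(N:ℝ) - QR) - (c * ((N:ℝ) ^ (1 + (1:ℝ)/(d:ℝ))) - (d:ℝ)/2*(N:ℝ))
        = ((k:ℝ)*mR - QR - (c*(mR ^ (1 + (1:ℝ)/(d:ℝ))) - (d:ℝ)/2*mR))
          + ((N:ℝ)-mR)*((k:ℝ)+(d:ℝ)/2-G)
          + (c*(mR ^ (1 + (1:ℝ)/(d:ℝ))) + G*((N:ℝ)-mR) - c*((N:ℝ) ^ (1 + (1:ℝ)/(d:ℝ)))) := by
      ring
    rw [hring, hfm_eq]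
    linarith [hchain1]
  have hAG0 : 0 ≤ A - G := by linarith
  have hAGe : A - G ≤ eps := by linarith
  have hcoefeq : (k:ℝ)+(d:ℝ)/2-G = 1/2 + (A - G) := by
    rw [hAdef]
    ring
  have hterm1 : (d:ℝ)/((d:ℝ)+1)*mR*(A-G) ≤ (d:ℝ)/((d:ℝ)+1)*mR*eps := by
    apply mul_le_mul_of_nonneg_left hAGe
    positivity
  have hc2 : 0 ≤ (k:ℝ)+(d:ℝ)/2-G := by
    rw [hcoefeq]
    exact add_nonneg (by norm_num) hAG0
  have hc3 : (k:ℝ)+(d:ℝ)/2-G ≤ 1/2+eps := by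
    rw [hcoefeq]
    exact add_le_add_right hAGe _
  have hterm2 : ((N:ℝ)-mR)*((k:ℝ)+(d:ℝ)/2-G) ≤ ((d:ℝ)*mR/(k:ℝ))*(1/2+eps) :=
    mul_le_mul hNm_ub hc3 hc2 (div_nonneg (mul_nonneg hD0.le hmpos.le) hK0.le)
  -- target lower bound
  set w : ℝ := (N:ℝ) ^ (1 - (1:ℝ)/(d:ℝ)) with hw
  have hmw : mR ^ (1 - (1:ℝ)/(d:ℝ)) = mR * F / G := by
    rw [Real.rpow_sub hmpos, Real.rpow_one, hGm]
    rw [div_div_eq_mul_div]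
  have hwm : mR * F / G ≤ w := by
    rw [hw, ← hmw]
    apply Real.rpow_le_rpow hmpos.le (by linarith) _
    have : (0:ℝ) < (1:ℝ)/(d:ℝ) := by positivity
    have h9 : (1:ℝ)/(d:ℝ) ≤ 1/2 := by
      rw [div_le_div_iff₀ hD0 two_pos]
      linarith
    linarith
  have htarget : RB * mR / G ≤ F⁻¹ * RB * w := by
    have h10 : F⁻¹ * RB * (mR * F / G) = RB * mR / G := by
      field_simp
    rw [← h10]
    apply mul_le_mul_of_nonneg_left hwm
    positivity
  -- master inequality
  have hmaster : ((d:ℝ)+1)*(2*(k:ℝ)+(d:ℝ)-1)*((k:ℝ)*((d:ℝ)+11)+(d:ℝ)^2-1)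
      ≤ 24*(k:ℝ)^2*((d:ℝ)+1) + 6*(k:ℝ)^2*((d:ℝ)-1)^2*(2*(d:ℝ)+3) := by
    rcases hMC with ⟨hk2, hd3⟩ | ⟨hd4, hdk⟩
    · have hK2 : (2:ℝ) ≤ (k:ℝ) := by exact_mod_cast hk2
      have : d = 2 ∨ d = 3 := by omega
      apply master23 _ hK2
      rcases this with rfl | rfl
      · left; norm_num
      · right; norm_num
    · apply master4
      · exact_mod_cast hd4
      · exact_mod_cast hdk
  -- assemble: brack
  set brack : ℝ := (d:ℝ)/((d:ℝ)+1)*eps + ((d:ℝ)/(k:ℝ))*(1/2+eps) with hbrackdef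
  have hbrack0 : 0 ≤ brack := by
    rw [hbrackdef]
    have h11 : (0:ℝ) ≤ (d:ℝ)/((d:ℝ)+1)*eps := by positivity
    have h12 : (0:ℝ) ≤ ((d:ℝ)/(k:ℝ))*(1/2+eps) := by positivity
    linarith
  have hbrack_eq : brack = (d:ℝ)*((k:ℝ)*((d:ℝ)+11)+(d:ℝ)^2-1)/(24*(k:ℝ)^2) := by
    rw [hbrackdef, hepsdef]
    field_simp
    ring
  have hAb : A * brack ≤ RB := by
    have hpos48 : (0:ℝ) < 48*(k:ℝ)^2*((d:ℝ)+1) := by positivity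
    rw [← mul_le_mul_iff_of_pos_right hpos48]
    have hid1 : A*brack*(48*(k:ℝ)^2*((d:ℝ)+1))
        = (d:ℝ)*(((d:ℝ)+1)*(2*(k:ℝ)+(d:ℝ)-1)*((k:ℝ)*((d:ℝ)+11)+(d:ℝ)^2-1)) := by
      rw [hbrack_eq, hAdef]
      field_simp
      ring
    have hid2 : RB*(48*(k:ℝ)^2*((d:ℝ)+1))
        = (d:ℝ)*(24*(k:ℝ)^2*((d:ℝ)+1) + 6*(k:ℝ)^2*((d:ℝ)-1)^2*(2*(d:ℝ)+3)) := by
      rw [hRB]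
      field_simp
      ring
    rw [hid1, hid2]
    exact mul_le_mul_of_nonneg_left hmaster hD0.le
  have hGb : G * brack ≤ RB := by
    have := mul_le_mul_of_nonneg_right hGA hbrack0
    linarith [hAb]
  have hlast : (d:ℝ)/((d:ℝ)+1)*mR*eps + ((d:ℝ)*mR/(k:ℝ))*(1/2+eps) ≤ RB * mR / G := by
    rw [le_div_iff₀ hGpos]
    have hid3 : ((d:ℝ)/((d:ℝ)+1)*mR*eps + ((d:ℝ)*mR/(k:ℝ))*(1/2+eps)) * G
        = (G * brack) * mR := by
      rw [hbrackdef]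
      field_simp
    rw [hid3]
    have := mul_le_mul_of_nonneg_right hGb hmpos.le
    linarith [this]
  rw [hBeq]
  linarith [hfN, hterm1, hterm2, htarget, hlast]

end DegLex
namespace DegLex

lemma le_choose_add' (n : ℕ) : ∀ e : ℕ, n ≤ (n + (e+1)).choose (e+1)
  | 0 => by simp
  | (e+1) => by
      have h2 : (n + (e+1+1)).choose (e+1+1)
          = (n+(e+1)).choose (e+1) + (n+(e+1)).choose (e+1+1) := by
        have he : n + (e+1+1) = (n+(e+1)) + 1 := by omega
        rw [he, Nat.choose_succ_succ]
      have h3 := le_choose_add' n e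
      omega

lemma le_choose_add (d : ℕ) (hd : 1 ≤ d) (n : ℕ) : n ≤ (n + d).choose d := by
  obtain ⟨e, rfl⟩ : ∃ e, d = e + 1 := ⟨d - 1, by omega⟩
  exact le_choose_add' n e

end DegLex

theorem degV_asymptotics' (d : ℕ) (hd : 1 ≤ d) (N : ℕ) (hN : 2 ≤ N) :
    0 ≤ (degV d N : ℝ) - xi d N ∧
    (degV d N : ℝ) - xi d N ≤
      (Nat.factorial d : ℝ) ^ (-(1 : ℝ) / (d : ℝ)) *
        ((d : ℝ) / 2 + (d : ℝ) * ((d : ℝ) - 1) ^ 2 * (2 * (d : ℝ) + 3) / (8 * ((d : ℝ) + 1))) *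
        (N : ℝ) ^ (1 - (1 : ℝ) / (d : ℝ)) := by
  have hex : ∃ t : ℕ, N ≤ (t + d).choose d := ⟨N, DegLex.le_choose_add d hd N⟩
  obtain ⟨k, h1, h2⟩ : ∃ k, (N ≤ (k + d).choose d) ∧ ∀ j, j < k → (j + d).choose d < N := by
    refine ⟨Nat.find hex, Nat.find_spec hex, ?_⟩
    intro j hj
    have := Nat.find_min hex hj
    omega
  have hk1 : 1 ≤ k := by
    rcases Nat.eq_zero_or_pos k with rfl | h
    · exfalso
      rw [Nat.zero_add, Nat.choose_self] at h1
      omega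
    · exact h
  have hm : (k - 1 + d).choose d < N := h2 (k-1) (by omega)
  have hform : degV d N + (k + d).choose (d+1) = k * N := by
    rw [DegLex.degV_eq_sum d N hd]
    exact DegLex.sum_tDeg hd N k h1 h2
  have hformR : (degV d N : ℝ) = (k:ℝ)*(N:ℝ) - ((k + d).choose (d+1) : ℝ) := by
    have hc : ((degV d N : ℕ) : ℝ) + (((k+d).choose (d+1) : ℕ) : ℝ) = ((k * N : ℕ) : ℝ) := by
      exact_mod_cast congrArg (fun x : ℕ => (x:ℝ)) hform
    push_cast at hc
    linarith
  constructor
  · rw [hformR]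
    exact DegLex.lower_bound d N k hd hk1 h1 hm
  · rw [hformR]
    rcases Nat.lt_or_ge d 2 with hd1 | hd2
    · -- d = 1
      have hd1' : d = 1 := by omega
      subst hd1'
      have hc1 : (k+1).choose 1 = k + 1 := Nat.choose_one_right _
      have hNk : N = k + 1 := by
        have ha : N ≤ k + 1 := by
          have := h1
          rwa [hc1] at this
        have hb : (k - 1 + 1).choose 1 < N := hm
        rw [Nat.choose_one_right] at hb
        omega
      have hQ2 : ((k+1).choose 2) * 2 = (k+1) * k := by
        have h := Nat.choose_succ_right_eq (k+1) 1
        rw [Nat.choose_one_right] at h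
        simpa using h
      have hQR : (((k+1).choose 2 : ℕ) : ℝ) = ((k:ℝ)+1)*(k:ℝ)/2 := by
        rw [eq_div_iff (by norm_num : (2:ℝ) ≠ 0)]
        exact_mod_cast hQ2
      have hxi1 : xi 1 N = (N:ℝ)^2/2 - (N:ℝ)/2 := by
        have hNe : (N:ℝ) ^ (1 + (1:ℝ)/((1:ℕ):ℝ)) = (N:ℝ)^(2:ℕ) := by
          rw [show (1 + (1:ℝ)/((1:ℕ):ℝ)) = ((2:ℕ):ℝ) by norm_num, Real.rpow_natCast]
        rw [xi, hNe]
        norm_num [Real.one_rpow]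
        ring
      have hNR : (N:ℝ) = (k:ℝ) + 1 := by exact_mod_cast hNk
      have hRHS : (Nat.factorial 1 : ℝ) ^ (-(1 : ℝ) / ((1:ℕ) : ℝ)) *
          (((1:ℕ) : ℝ) / 2 + ((1:ℕ) : ℝ) * (((1:ℕ) : ℝ) - 1) ^ 2 * (2 * ((1:ℕ) : ℝ) + 3)
            / (8 * (((1:ℕ) : ℝ) + 1))) * (N : ℝ) ^ (1 - (1 : ℝ) / ((1:ℕ) : ℝ)) = 1/2 := by
        norm_num [Real.one_rpow, Real.rpow_zero]
      rw [hxi1]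
      have hgoal : (k:ℝ)*(N:ℝ) - (((k+1).choose 2 : ℕ) : ℝ) - ((N:ℝ)^2/2 - (N:ℝ)/2) = 0 := by
        rw [hQR, hNR]
        ring
      calc (k:ℝ)*(N:ℝ) - (((k+1).choose 2 : ℕ) : ℝ) - ((N:ℝ)^2/2 - (N:ℝ)/2) = 0 := hgoal
        _ ≤ 1/2 := by norm_num
        _ = _ := hRHS.symm
    · -- d ≥ 2
      have hD2 : (2:ℝ) ≤ (d:ℝ) := by exact_mod_cast hd2
      by_cases hk1' : k = 1
      · subst hk1'
        apply DegLex.upper_case_a d N 1 hd2 (by omega)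
        have h := DegLex.small_cond1 hD2
        simpa using h
      · have hk2 : 2 ≤ k := by omega
        rcases Nat.lt_or_ge d 4 with hd3 | hd4
        · exact DegLex.upper_case_b d N k hd2 hk1 h1 hm (Or.inl ⟨hk2, by omega⟩)
        · rcases le_or_gt k d with hkd | hkd
          · apply DegLex.upper_case_a d N k hd2 (by omega)
            exact DegLex.small_cond2 (by exact_mod_cast hd4)
              (by exact_mod_cast hk1) (by exact_mod_cast hkd)
          · exact DegLex.upper_case_b d N k hd2 hk1 h1 hm (Or.inr ⟨hd4, by omega⟩)

/-- **Theorem 2.7** (quantitative form). For `d ≥ 1` and all `N ≥ 2`,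
`0 ≤ 𝒱_d(N) − ξ_d(N) ≤ (d!)^{−1/d}(d/2 + d(d−1)²(2d+3)/(8(d+1)))·N^{1−1/d}`; in particular
`𝒱_d(N) ≥ ξ_d(N)` and `𝒱_d(N) = (d/(d+1))(d!)^{1/d}N^{1+1/d} − (d/2)N + O(N^{1−1/d})`. -/
theorem degV_asymptotics (d : ℕ) (hd : 1 ≤ d) (N : ℕ) (hN : 2 ≤ N) :
    0 ≤ (degV d N : ℝ) - xi d N ∧
    (degV d N : ℝ) - xi d N ≤
      (Nat.factorial d : ℝ) ^ (-(1 : ℝ) / (d : ℝ)) *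
        ((d : ℝ) / 2 + (d : ℝ) * ((d : ℝ) - 1) ^ 2 * (2 * (d : ℝ) + 3) / (8 * ((d : ℝ) + 1))) *
        (N : ℝ) ^ (1 - (1 : ℝ) / (d : ℝ)) :=
  degV_asymptotics' d hd N hN
end
end
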